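/- arXiv:2605.15285 — 8 statements merged into one kernel-verified Lean document; each statement's English description precedes it below -/
import Mathlib

section
/- Let X and Y be real Banach spaces and let L : X → Y be a continuous linear operator that does not lie in the operator-norm closure of the set of finite-rank continuous linear operators from X to Y; set δ := dist(L, {finite-rank operators from X to Y}) (distance in operator norm), so δ > 0. Then for every cylindrical map G = D ∘ f ∘ E with f : ℝ^N → ℝ^{N'} Fréchet differentiable at every point, and every x ∈ X, the Fréchet derivative of G at x satisfies ‖L − DG(x)‖_{L(X,Y)} ≥ δ. In particular, for the smooth map F(x) := L x one has sup_{x ∈ K} ‖DF(x) − DG(x)‖_{L(X,Y)} ≥ δ for every nonempty compact K ⊆ X, so cylindrical maps with differentiable finite-dimensional part are not dense in the compact-open C^1 topology of C^1(X,Y) defined via operator norms of derivatives. -/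
/-! The derivative of a cylindrical map `D ∘ f ∘ E` at any point factors through the
finite-dimensional space on which `D` is defined, so it has finite rank; hence it stays at
distance at least `δ` from `L`. -/

open scoped ENNReal

def FiniteRankOp {X Y : Type*} [NormedAddCommGroup X] [NormedSpace ℝ X]
    [NormedAddCommGroup Y] [NormedSpace ℝ Y] (T : X →L[ℝ] Y) : Prop :=
  FiniteDimensional ℝ (LinearMap.range (T : X →ₗ[ℝ] Y))

namespace FiniteRankOp

variable {X V F Y : Type*} [NormedAddCommGroup X] [NormedSpace ℝ X]
  [NormedAddCommGroup V] [NormedSpace ℝ V] [NormedAddCommGroup F] [NormedSpace ℝ F]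
  [NormedAddCommGroup Y] [NormedSpace ℝ Y]

theorem zero : FiniteRankOp (0 : X →L[ℝ] Y) := by
  rw [FiniteRankOp, ContinuousLinearMap.toLinearMap_zero, LinearMap.range_zero]
  infer_instance

theorem of_finiteDimensional [FiniteDimensional ℝ X] (T : X →L[ℝ] Y) : FiniteRankOp T :=
  inferInstanceAs (FiniteDimensional ℝ (LinearMap.range (T : X →ₗ[ℝ] Y)))

theorem comp {D : V →L[ℝ] Y} (hD : FiniteRankOp D) (T : X →L[ℝ] V) :
    FiniteRankOp (D.comp T) :=
  haveI : FiniteDimensional ℝ (LinearMap.range (D : V →ₗ[ℝ] Y)) := hD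
  Submodule.finiteDimensional_of_le
    (LinearMap.range_comp_le_range (T : X →ₗ[ℝ] V) (D : V →ₗ[ℝ] Y))

theorem fderiv_cylindrical [FiniteDimensional ℝ F] (E : X →L[ℝ] V) {f : V → F}
    (D : F →L[ℝ] Y) {x : X} (hf : DifferentiableAt ℝ f (E x)) :
    FiniteRankOp (fderiv ℝ (fun y => D (f (E y))) x) := by
  have hG : HasFDerivAt (fun y => D (f (E y))) (D.comp ((fderiv ℝ f (E x)).comp E)) x :=
    D.hasFDerivAt.comp x (hf.hasFDerivAt.comp x E.hasFDerivAt)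
  rw [hG.fderiv]
  exact (of_finiteDimensional D).comp _

end FiniteRankOp

theorem infDist_finiteRankOp_pos {X Y : Type*} [NormedAddCommGroup X] [NormedSpace ℝ X]
    [NormedAddCommGroup Y] [NormedSpace ℝ Y] {L : X →L[ℝ] Y}
    (hL : L ∉ closure {T : X →L[ℝ] Y | FiniteRankOp T}) :
    0 < Metric.infDist L {T : X →L[ℝ] Y | FiniteRankOp T} :=
  (Metric.infDist_pos_iff_notMem_closure ⟨0, FiniteRankOp.zero⟩).1 hL

theorem stmt_0_general {X Y : Type*} [NormedAddCommGroup X] [NormedSpace ℝ X]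
    [NormedAddCommGroup Y] [NormedSpace ℝ Y]
    (L : X →L[ℝ] Y)
    (hL : L ∉ closure {T : X →L[ℝ] Y | FiniteRankOp T})
    (δ : ℝ) (hδ : δ = Metric.infDist L {T : X →L[ℝ] Y | FiniteRankOp T}) :
    0 < δ ∧
    ∀ (N N' : ℕ) (E : X →L[ℝ] (Fin N → ℝ)) (f : (Fin N → ℝ) → (Fin N' → ℝ))
      (D : (Fin N' → ℝ) →L[ℝ] Y), Differentiable ℝ f →
      (∀ x : X, δ ≤ ‖(L : X →L[ℝ] Y) - fderiv ℝ (fun y : X => D (f (E y))) x‖) ∧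
      (∀ K : Set X, IsCompact K → K.Nonempty →
        ENNReal.ofReal δ ≤
          ⨆ x ∈ K,
            (‖fderiv ℝ (fun y : X => L y) x - fderiv ℝ (fun y : X => D (f (E y))) x‖₊ :
              ℝ≥0∞)) := by
  subst hδ
  refine ⟨infDist_finiteRankOp_pos hL, fun N N' E f D hf => ?_⟩
  have hdist (x : X) : Metric.infDist L {T : X →L[ℝ] Y | FiniteRankOp T} ≤
      ‖L - fderiv ℝ (fun y => D (f (E y))) x‖ := by
    rw [← dist_eq_norm]
    exact Metric.infDist_le_dist_of_mem (FiniteRankOp.fderiv_cylindrical E D (hf (E x)))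
  refine ⟨hdist, fun K _ ⟨x₀, hx₀⟩ => ?_⟩
  calc ENNReal.ofReal (Metric.infDist L {T : X →L[ℝ] Y | FiniteRankOp T})
      ≤ ‖fderiv ℝ (fun y => L y) x₀ - fderiv ℝ (fun y => D (f (E y))) x₀‖ₑ := by
        rw [L.fderiv, ← ofReal_norm]
        exact ENNReal.ofReal_le_ofReal (hdist x₀)
    _ ≤ _ := le_iSup₂_of_le x₀ hx₀ le_rfl

/-- if `L` lies outside the operator-norm closure of the finite-rank operators,
with `δ` the distance from `L` to the finite-rank operators, then `δ > 0`, and for every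
cylindrical map `G = D ∘ f ∘ E` with `f` everywhere differentiable, `‖L − DG(x)‖ ≥ δ` at every
point `x`; in particular, for `F(x) := L x`, `sup_{x ∈ K} ‖DF(x) − DG(x)‖ ≥ δ` for every
nonempty compact `K ⊆ X`. -/
theorem stmt_0 {X Y : Type*} [NormedAddCommGroup X] [NormedSpace ℝ X] [CompleteSpace X]
    [NormedAddCommGroup Y] [NormedSpace ℝ Y] [CompleteSpace Y]
    (L : X →L[ℝ] Y)
    (hL : L ∉ closure {T : X →L[ℝ] Y | FiniteRankOp T})
    (δ : ℝ) (hδ : δ = Metric.infDist L {T : X →L[ℝ] Y | FiniteRankOp T}) :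
    0 < δ ∧
    ∀ (N N' : ℕ) (E : X →L[ℝ] (Fin N → ℝ)) (f : (Fin N → ℝ) → (Fin N' → ℝ))
      (D : (Fin N' → ℝ) →L[ℝ] Y), Differentiable ℝ f →
      (∀ x : X, δ ≤ ‖(L : X →L[ℝ] Y) - fderiv ℝ (fun y : X => D (f (E y))) x‖) ∧
      (∀ K : Set X, IsCompact K → K.Nonempty →
        ENNReal.ofReal δ ≤
          ⨆ x ∈ K,
            (‖fderiv ℝ (fun y : X => L y) x - fderiv ℝ (fun y : X => D (f (E y))) x‖₊ :
              ℝ≥0∞)) :=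
  stmt_0_general L hL δ hδ
end

section
/- Let X and Y be real Banach spaces with the approximation property, let k ∈ ℕ, and let (𝒩_{N,N'}) be a family of finite-dimensional approximators with the C^k compact-open density property. Then for every k-times continuously Fréchet differentiable map F : X → Y, all compact sets K, K' ⊆ X, and every ε > 0, there exist N, N' ∈ ℕ, a continuous linear map E : X → ℝ^N, a continuous linear map D : ℝ^{N'} → Y, and f ∈ 𝒩_{N,N'} such that for every 0 ≤ i ≤ k: sup_{x ∈ K, h^1, …, h^i ∈ K'} ‖D^i F(x)(h^1, …, h^i) − D^i(D ∘ f ∘ E)(x)(h^1, …, h^i)‖_Y < ε. -/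
open MeasureTheory
open scoped Topology ENNReal NNReal

/-!
Each of three approximations costs `ε / 3`. Since `(x, h) ↦ D^i F x h` is uniformly continuous
near the compact set `K × K'^i`, a finite-rank `P = J ∘ E` close to the identity on `K ∪ K'`
barely changes `D^i F x h` when `x` and the `h j` are replaced by their images under `P`. The
resulting values form a compact subset of `Y`, on which a finite-rank `T = D ∘ S` is uniformly
close to the identity. By the chain rule, `T (D^i F (P x) (P ∘ h)) = D (D^i g (E x) (E ∘ h))` for
the finite-dimensional map `g = S ∘ F ∘ J`, and replacing `g` by some `f ∈ 𝒩` that is `C^k`-close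
on the compact set `E '' K` costs little because `E '' K'` is bounded.
-/

/-- A real Banach space `Z` has the approximation property: every compact set can be
uniformly approximated to arbitrary precision by a finite-rank continuous linear operator. -/
def HasApproxProperty (Z : Type*) [NormedAddCommGroup Z] [NormedSpace ℝ Z] : Prop :=
  ∀ K : Set Z, IsCompact K → ∀ ε : ℝ, 0 < ε →
    ∃ S : Z →L[ℝ] Z, FiniteDimensional ℝ (LinearMap.range (S : Z →ₗ[ℝ] Z)) ∧ ∀ z ∈ K, ‖z - S z‖ < ε

open Filter Set

theorem IsCompact.eventually_forall_dist_lt {α β : Type*} [PseudoMetricSpace α]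
    [PseudoMetricSpace β] {s : Set α} (hs : IsCompact s) {f : α → β} (hf : Continuous f)
    {ε : ℝ} (hε : 0 < ε) :
    ∀ᶠ δ in 𝓝[>] 0, ∀ x ∈ s, ∀ y, dist x y < δ → dist (f x) (f y) < ε := by
  obtain ⟨δ, hδ, hfδ⟩ := Metric.mem_uniformity_dist.1 <|
    hs.uniformContinuousAt_of_continuousAt f (fun x _ => hf.continuousAt)
      (Metric.dist_mem_uniformity hε)
  filter_upwards [Ioo_mem_nhdsGT hδ] with δ' hδ' x hx y hxy
  exact hfδ (hxy.trans hδ'.2) hx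

section

variable {𝕜 : Type*} [NontriviallyNormedField 𝕜]
  {X G H Y : Type*} [NormedAddCommGroup X] [NormedSpace 𝕜 X]
  [NormedAddCommGroup G] [NormedSpace 𝕜 G] [NormedAddCommGroup H] [NormedSpace 𝕜 H]
  [NormedAddCommGroup Y] [NormedSpace 𝕜 Y]

theorem ContinuousLinearMap.exists_comp_eq_of_finiteDimensional_range [CompleteSpace 𝕜]
    (P : X →L[𝕜] Y) (hP : FiniteDimensional 𝕜 (LinearMap.range (P : X →ₗ[𝕜] Y))) :
    ∃ (n : ℕ) (E : X →L[𝕜] (Fin n → 𝕜)) (J : (Fin n → 𝕜) →L[𝕜] Y), ∀ x, J (E x) = P x := by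
  set V := LinearMap.range (P : X →ₗ[𝕜] Y)
  let e : V ≃L[𝕜] (Fin (Module.finrank 𝕜 V) → 𝕜) :=
    (Module.finBasis 𝕜 V).equivFun.toContinuousLinearEquiv
  refine ⟨_, e.toContinuousLinearMap.comp (P.codRestrict V fun x => LinearMap.mem_range_self _ x),
    V.subtypeL.comp e.symm.toContinuousLinearMap, fun x => ?_⟩
  simp

theorem ContinuousLinearMap.iteratedFDeriv_comp_comp_apply (D : H →L[𝕜] Y) (E : X →L[𝕜] G)
    {f : G → H} {n : WithTop ℕ∞} (hf : ContDiff 𝕜 n f) {i : ℕ} (hi : i ≤ n) (x : X)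
    (v : Fin i → X) :
    iteratedFDeriv 𝕜 i (fun z => D (f (E z))) x v = D (iteratedFDeriv 𝕜 i f (E x) (E ∘ v)) := by
  change iteratedFDeriv 𝕜 i (D ∘ (f ∘ E)) x v = _
  rw [D.iteratedFDeriv_comp_left (hf.comp E.contDiff).contDiffAt hi,
    E.iteratedFDeriv_comp_right hf x hi]
  rfl

theorem ContDiff.continuous_iteratedFDeriv_apply {F : X → Y} {n : WithTop ℕ∞} (hF : ContDiff 𝕜 n F)
    {i : ℕ} (hi : i ≤ n) : Continuous fun p : X × (Fin i → X) => iteratedFDeriv 𝕜 i F p.1 p.2 :=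
  ((hF.continuous_iteratedFDeriv hi).comp continuous_fst).eval continuous_snd

theorem ContDiff.isCompact_iteratedFDeriv_apply {F : X → Y} {k : ℕ} (hF : ContDiff 𝕜 k F)
    {K K' : Set X} (hK : IsCompact K) (hK' : IsCompact K') :
    IsCompact {y | ∃ i ≤ k, ∃ x ∈ K, ∃ h : Fin i → X, (∀ j, h j ∈ K') ∧
      iteratedFDeriv 𝕜 i F x h = y} := by
  convert (finite_Iic k).isCompact_biUnion fun i hi =>
    (hK.prod (isCompact_univ_pi fun _ : Fin i => hK')).image
      (hF.continuous_iteratedFDeriv_apply (i := i) (by exact_mod_cast hi)) using 1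
  ext y
  simp [and_assoc]

theorem eventually_norm_iteratedFDeriv_apply_sub_apply_comp_lt {F : X → Y} {k : ℕ}
    (hF : ContDiff 𝕜 k F) {K K' : Set X} (hK : IsCompact K) (hK' : IsCompact K') {ε : ℝ}
    (hε : 0 < ε) :
    ∀ᶠ δ in 𝓝[>] 0, ∀ P : X → X, (∀ z ∈ K ∪ K', ‖z - P z‖ < δ) →
      ∀ i ≤ k, ∀ x ∈ K, ∀ h : Fin i → X, (∀ j, h j ∈ K') →
        ‖iteratedFDeriv 𝕜 i F x h - iteratedFDeriv 𝕜 i F (P x) (P ∘ h)‖ < ε := by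
  have uniform : ∀ i ∈ Iic k, ∀ᶠ δ in 𝓝[>] (0 : ℝ),
      ∀ p ∈ K ×ˢ univ.pi (fun _ : Fin i => K'), ∀ q, dist p q < δ →
        dist (iteratedFDeriv 𝕜 i F p.1 p.2) (iteratedFDeriv 𝕜 i F q.1 q.2) < ε := fun i hi =>
    (hK.prod (isCompact_univ_pi fun _ => hK')).eventually_forall_dist_lt
      (hF.continuous_iteratedFDeriv_apply (by exact_mod_cast hi)) hε
  filter_upwards [(eventually_all_finite (finite_Iic k)).2 uniform, self_mem_nhdsWithin]
    with δ hδ (hδpos : 0 < δ) P hP i hi x hx h hh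
  rw [← dist_eq_norm]
  refine hδ i hi (x, h) ⟨hx, fun j _ => hh j⟩ (P x, P ∘ h) ?_
  rw [Prod.dist_eq, dist_eq_norm]
  exact max_lt (hP x (.inl hx))
    ((dist_pi_lt_iff hδpos).2 fun j => (dist_eq_norm _ _).trans_lt (hP _ (.inr (hh j))))

theorem Bornology.IsBounded.exists_pos_forall_norm_clm_apply_lt {B : Set G}
    (hB : Bornology.IsBounded B) (D : H →L[𝕜] Y) (k : ℕ) {ε : ℝ} (hε : 0 < ε) :
    ∃ η > 0, ∀ i ≤ k, ∀ A : ContinuousMultilinearMap 𝕜 (fun _ : Fin i => G) H, ‖A‖ < η →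
      ∀ v : Fin i → G, (∀ j, v j ∈ B) → ‖D (A v)‖ < ε := by
  obtain ⟨R, hR⟩ := hB.exists_norm_le
  set c := max R 1
  have hc : 0 < c := one_pos.trans_le (le_max_right _ _)
  refine ⟨ε / ((‖D‖ + 1) * c ^ k), by positivity, fun i hi A hA v hvB => ?_⟩
  have hv : ‖v‖ ≤ c := (pi_norm_le_iff_of_nonneg hc.le).2 fun j =>
    (hR _ (hvB j)).trans (le_max_left _ _)
  calc ‖D (A v)‖ ≤ (‖D‖ + 1) * (‖A‖ * c ^ k) := by
        refine (D.le_opNorm _).trans (mul_le_mul (by linarith) ?_ (norm_nonneg _) (by positivity))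
        exact (A.le_opNorm_mul_pow_of_le hv).trans
          (mul_le_mul_of_nonneg_left (pow_le_pow_right₀ (le_max_right _ _) hi) (norm_nonneg _))
    _ < (‖D‖ + 1) * (ε / ((‖D‖ + 1) * c ^ k) * c ^ k) := by gcongr
    _ = ε := by field_simp

end

theorem stmt_2_general {X Y : Type*} [NormedAddCommGroup X] [NormedSpace ℝ X]
    [NormedAddCommGroup Y] [NormedSpace ℝ Y]
    (hX : HasApproxProperty X) (hY : HasApproxProperty Y) (k : ℕ)
    (𝒩 : (N N' : ℕ) → Set ((Fin N → ℝ) → (Fin N' → ℝ)))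
    (h𝒩smooth : ∀ N N', ∀ f ∈ 𝒩 N N', ContDiff ℝ k f)
    (h𝒩dense : ∀ (N N' : ℕ) (g : (Fin N → ℝ) → (Fin N' → ℝ)), ContDiff ℝ k g →
      ∀ C : Set (Fin N → ℝ), IsCompact C → ∀ ε : ℝ, 0 < ε →
      ∃ f ∈ 𝒩 N N', ∀ i ≤ k, ∀ y ∈ C,
        ‖iteratedFDeriv ℝ i g y - iteratedFDeriv ℝ i f y‖ < ε)
    (F : X → Y) (hF : ContDiff ℝ k F)
    (K K' : Set X) (hK : IsCompact K) (hK' : IsCompact K')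
    (ε : ℝ) (hε : 0 < ε) :
    ∃ (N N' : ℕ) (E : X →L[ℝ] (Fin N → ℝ)) (D : (Fin N' → ℝ) →L[ℝ] Y)
      (f : (Fin N → ℝ) → (Fin N' → ℝ)), f ∈ 𝒩 N N' ∧
      ∀ i ≤ k, ∀ x ∈ K, ∀ h : Fin i → X, (∀ j, h j ∈ K') →
        ‖iteratedFDeriv ℝ i F x h -
          iteratedFDeriv ℝ i (fun z : X => D (f (E z))) x h‖ < ε := by
  have hε3 : 0 < ε / 3 := by positivity
  obtain ⟨δ, hFδ, hδ⟩ :=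
    ((eventually_norm_iteratedFDeriv_apply_sub_apply_comp_lt hF hK hK' hε3).and
      self_mem_nhdsWithin).exists
  obtain ⟨P, hPfin, hP⟩ := hX (K ∪ K') (hK.union hK') δ hδ
  obtain ⟨N, E, J, hJE⟩ := P.exists_comp_eq_of_finiteDimensional_range hPfin
  obtain ⟨T, hTfin, hT⟩ := hY _ (hF.isCompact_iteratedFDeriv_apply (hK.image P.continuous)
    (hK'.image P.continuous)) _ hε3
  obtain ⟨N', S, D, hDS⟩ := T.exists_comp_eq_of_finiteDimensional_range hTfin
  have hg : ContDiff ℝ k fun y => S (F (J y)) := S.contDiff.comp (hF.comp J.contDiff)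
  obtain ⟨η, hη, hDη⟩ :=
    (hK'.image E.continuous).isBounded.exists_pos_forall_norm_clm_apply_lt D k hε3
  obtain ⟨f, hf𝒩, hf⟩ := h𝒩dense N N' _ hg (E '' K) (hK.image E.continuous) η hη
  refine ⟨N, N', E, D, f, hf𝒩, fun i hi x hx h hh => ?_⟩
  have hik : (i : WithTop ℕ∞) ≤ k := by exact_mod_cast hi
  rw [D.iteratedFDeriv_comp_comp_apply E (h𝒩smooth N N' f hf𝒩) hik]
  set y := iteratedFDeriv ℝ i F (P x) (P ∘ h)
  set z := D (iteratedFDeriv ℝ i f (E x) (E ∘ h))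
  have encode : ‖iteratedFDeriv ℝ i F x h - y‖ < ε / 3 := hFδ P hP i hi x hx h hh
  have decode : ‖y - T y‖ < ε / 3 :=
    hT y ⟨i, hi, P x, mem_image_of_mem P hx, P ∘ h, fun j => mem_image_of_mem P (hh j), rfl⟩
  have hTy : T y = D (iteratedFDeriv ℝ i (fun y => S (F (J y))) (E x) (E ∘ h)) := by
    have hJEh : ⇑J ∘ ⇑E ∘ h = ⇑P ∘ h := funext fun j => hJE (h j)
    rw [S.iteratedFDeriv_comp_comp_apply J hF hik, hDS, hJE, hJEh]
  have approximate : ‖T y - z‖ < ε / 3 := by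
    rw [hTy, ← map_sub, ← sub_apply]
    exact hDη i hi _ (hf i hi (E x) (mem_image_of_mem E hx)) (E ∘ h)
      fun j => mem_image_of_mem E (hh j)
  linarith [norm_sub_le_norm_sub_add_norm_sub (iteratedFDeriv ℝ i F x h) y z,
    norm_sub_le_norm_sub_add_norm_sub y (T y) z]

/-- universal approximation in the `C^k_B` compact-open topology via
encoder-decoder architectures, for Banach spaces `X`, `Y` with the approximation property
and a family of finite-dimensional approximators with the `C^k` compact-open density
property. -/
theorem stmt_2 {X Y : Type*} [NormedAddCommGroup X] [NormedSpace ℝ X] [CompleteSpace X]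
    [NormedAddCommGroup Y] [NormedSpace ℝ Y] [CompleteSpace Y]
    (hX : HasApproxProperty X) (hY : HasApproxProperty Y) (k : ℕ)
    (𝒩 : (N N' : ℕ) → Set ((Fin N → ℝ) → (Fin N' → ℝ)))
    (h𝒩smooth : ∀ N N', ∀ f ∈ 𝒩 N N', ContDiff ℝ k f)
    (h𝒩dense : ∀ (N N' : ℕ) (g : (Fin N → ℝ) → (Fin N' → ℝ)), ContDiff ℝ k g →
      ∀ C : Set (Fin N → ℝ), IsCompact C → ∀ ε : ℝ, 0 < ε →
      ∃ f ∈ 𝒩 N N', ∀ i ≤ k, ∀ y ∈ C,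
        ‖iteratedFDeriv ℝ i g y - iteratedFDeriv ℝ i f y‖ < ε)
    (F : X → Y) (hF : ContDiff ℝ k F)
    (K K' : Set X) (hK : IsCompact K) (hK' : IsCompact K')
    (ε : ℝ) (hε : 0 < ε) :
    ∃ (N N' : ℕ) (E : X →L[ℝ] (Fin N → ℝ)) (D : (Fin N' → ℝ) →L[ℝ] Y)
      (f : (Fin N → ℝ) → (Fin N' → ℝ)), f ∈ 𝒩 N N' ∧
      ∀ i ≤ k, ∀ x ∈ K, ∀ h : Fin i → X, (∀ j, h j ∈ K') →
        ‖iteratedFDeriv ℝ i F x h -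
          iteratedFDeriv ℝ i (fun z : X => D (f (E z))) x h‖ < ε :=
  stmt_2_general hX hY k 𝒩 h𝒩smooth h𝒩dense F hF K K' hK hK' ε hε
end

section
/- Let X be a real Banach space and suppose there exist a compact set K ⊆ X and δ > 0 such that sup_{h ∈ K} ‖h − S h‖ ≥ δ for every finite-rank continuous linear operator S : X → X (a quantitative failure of the approximation property at K). Then for every cylindrical map G = D ∘ f ∘ E from X to X with f : ℝ^N → ℝ^{N'} Fréchet differentiable, and every x ∈ X, it holds sup_{h ∈ K} ‖h − DG(x) h‖ ≥ δ. Consequently the identity map of X cannot be approximated, together with its first derivative evaluated at directions in K, by cylindrical maps; the approximation property is necessary for universal approximation in the C^1 compact-open topology with directional seminorms. -/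
section Cylindrical

variable {𝕜 X F G H : Type*} [NontriviallyNormedField 𝕜]
  [NormedAddCommGroup X] [NormedSpace 𝕜 X] [NormedAddCommGroup F] [NormedSpace 𝕜 F]
  [NormedAddCommGroup G] [NormedSpace 𝕜 G] [NormedAddCommGroup H] [NormedSpace 𝕜 H]

theorem HasFDerivAt.clm_comp_comp {f : F → G} {f' : F →L[𝕜] G} (E : X →L[𝕜] F)
    (D : G →L[𝕜] H) {x : X} (hf : HasFDerivAt f f' (E x)) :
    HasFDerivAt (fun y => D (f (E y))) (D.comp (f'.comp E)) x :=
  D.hasFDerivAt.comp x (hf.comp x E.hasFDerivAt)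

theorem ContinuousLinearMap.finiteDimensional_range_comp [FiniteDimensional 𝕜 G]
    (D : G →L[𝕜] H) (T : X →L[𝕜] G) :
    FiniteDimensional 𝕜 (LinearMap.range (D.comp T : X →ₗ[𝕜] H)) :=
  Submodule.finiteDimensional_of_le (LinearMap.range_comp_le_range (T : X →ₗ[𝕜] G) (D : G →ₗ[𝕜] H))

end Cylindrical

theorem stmt_4_general {X : Type*} [NormedAddCommGroup X] [NormedSpace ℝ X]
    (K : Set X) (δ : ℝ)
    (hAP : ∀ S : X →L[ℝ] X, FiniteDimensional ℝ (LinearMap.range (S : X →ₗ[ℝ] X)) →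
      δ ≤ ⨆ h ∈ K, ‖h - S h‖)
    (N N' : ℕ) (E : X →L[ℝ] (Fin N → ℝ)) (f : (Fin N → ℝ) → (Fin N' → ℝ))
    (D : (Fin N' → ℝ) →L[ℝ] X) (hf : Differentiable ℝ f) (x : X) :
    δ ≤ ⨆ h ∈ K, ‖h - fderiv ℝ (fun y : X => D (f (E y))) x h‖ := by
  rw [((hf (E x)).hasFDerivAt.clm_comp_comp E D).fderiv]
  exact hAP _ (D.finiteDimensional_range_comp _)

/-- if the approximation property fails quantitatively at a compact set `K`
(every finite-rank operator `S` satisfies `sup_{h ∈ K} ‖h − S h‖ ≥ δ`), then for every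
cylindrical map `G = D ∘ f ∘ E` with `f` differentiable and every `x`,
`sup_{h ∈ K} ‖h − DG(x) h‖ ≥ δ`: the identity cannot be approximated together with its
derivative by cylindrical maps. -/
theorem stmt_4 {X : Type*} [NormedAddCommGroup X] [NormedSpace ℝ X] [CompleteSpace X]
    (K : Set X) (hK : IsCompact K) (δ : ℝ) (hδ : 0 < δ)
    (hAP : ∀ S : X →L[ℝ] X, FiniteDimensional ℝ (LinearMap.range (S : X →ₗ[ℝ] X)) →
      δ ≤ ⨆ h ∈ K, ‖h - S h‖)
    (N N' : ℕ) (E : X →L[ℝ] (Fin N → ℝ)) (f : (Fin N → ℝ) → (Fin N' → ℝ))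
    (D : (Fin N' → ℝ) →L[ℝ] X) (hf : Differentiable ℝ f) (x : X) :
    δ ≤ ⨆ h ∈ K, ‖h - fderiv ℝ (fun y : X => D (f (E y))) x h‖ :=
  stmt_4_general K δ hAP N N' E f D hf x
end

section
/- Let X and Y be real Banach spaces, k ∈ ℕ, p ≥ 1, and let μ be a finite Borel measure on X × X^k satisfying the Radon–Nikodym domination assumption with constants C_1, …, C_k. Then for every k-times continuously Fréchet differentiable F : X → Y and every 1 ≤ i ≤ k: ∫_{X × X^i} ‖D^i F(x)(h^1, …, h^i)‖_Y^p dμ^{0:i}(x, h^1, …, h^i) ≤ C_i · ∫_X ‖D^i F(x)‖_{L^i(X,Y)}^p dμ^0(x). Consequently ‖F‖_{W^{k,p}_{B,μ}} ≤ max(1, C_1, …, C_k)^{1/p} · ‖F‖_{W^{k,p}_{μ^0}}. -/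
open MeasureTheory
open scoped Topology ENNReal NNReal

/-! Pointwise `‖D^iF(x)(h)‖^p ≤ ‖D^iF(x)‖^p · ∏ r ‖h^r‖^p`, and the domination assumption says
exactly that the pushforward to `X` of the measure `(∏ r ‖h^r‖^p) · μ^{0:i}` is at most `C_i · μ^0`;
integrating `‖D^iF‖^p` against both gives the bound. For `i = 0` both sides are integrals of
`‖F‖^p` against `μ^0`, so the factor `1` suffices. -/

/-- The marginal `μ^{0:i}` on `X × X^i` of a measure `μ` on `X × X^k`, for `i ≤ k`:
the pushforward under `(x, h^1, …, h^k) ↦ (x, h^1, …, h^i)`. -/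
noncomputable def marginalUpTo {X : Type*} [MeasurableSpace X] {k : ℕ}
    (μ : Measure (X × (Fin k → X))) (i : ℕ) (hik : i ≤ k) :
    Measure (X × (Fin i → X)) :=
  μ.map fun z => (z.1, fun j => z.2 (Fin.castLE hik j))

lemma lintegral_comp_mul_le_of_setLIntegral_preimage_le {X Z : Type*} [MeasurableSpace X]
    [MeasurableSpace Z] {ν : Measure Z} {μ₀ : Measure X} {f : Z → X} {w : Z → ℝ≥0∞}
    {c : ℝ≥0∞} (hf : Measurable f) (hw : Measurable w)
    (hdom : ∀ A, MeasurableSet A → ∫⁻ z in f ⁻¹' A, w z ∂ν ≤ c * μ₀ A)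
    {g : X → ℝ≥0∞} (hg : Measurable g) :
    ∫⁻ z, g (f z) * w z ∂ν ≤ c * ∫⁻ x, g x ∂μ₀ := by
  have hmap_le : (ν.withDensity w).map f ≤ c • μ₀ := Measure.le_iff.mpr fun A hA => by
    rw [Measure.map_apply hf hA, withDensity_apply _ (hf hA)]
    exact hdom A hA
  calc ∫⁻ z, g (f z) * w z ∂ν = ∫⁻ x, g x ∂((ν.withDensity w).map f) := by
        rw [lintegral_map hg hf, lintegral_withDensity_eq_lintegral_mul _ hw
          (show Measurable fun z => g (f z) from hg.comp hf)]
        simp only [Pi.mul_apply, mul_comm]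
    _ ≤ ∫⁻ x, g x ∂(c • μ₀) := lintegral_mono' hmap_le le_rfl
    _ = c * ∫⁻ x, g x ∂μ₀ := lintegral_smul_measure _ _

lemma lintegral_marginalUpTo_comp_fst {X : Type*} [MeasurableSpace X] {k i : ℕ}
    (μ : Measure (X × (Fin k → X))) (hik : i ≤ k) {g : X → ℝ≥0∞} (hg : Measurable g) :
    ∫⁻ z, g z.1 ∂(marginalUpTo μ i hik) = ∫⁻ x, g x ∂(μ.map Prod.fst) := by
  have hproj : Measurable fun z : X × (Fin k → X) => (z.1, fun j => z.2 (Fin.castLE hik j)) :=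
    measurable_fst.prodMk
      (measurable_pi_lambda _ fun j => (measurable_pi_apply _).comp measurable_snd)
  rw [marginalUpTo, lintegral_map (show Measurable fun z : X × (Fin i → X) => g z.1
    from hg.comp measurable_fst) hproj, lintegral_map hg measurable_fst]

section NormedSpaces

variable {X Y : Type*} [NormedAddCommGroup X] [NormedSpace ℝ X] [NormedAddCommGroup Y]
  [NormedSpace ℝ Y]

lemma ContinuousMultilinearMap.nnnorm_apply_rpow_le {i : ℕ} {p : ℝ} (hp : 0 ≤ p)
    (f : ContinuousMultilinearMap ℝ (fun _ : Fin i => X) Y) (m : Fin i → X) :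
    (‖f m‖₊ : ℝ≥0∞) ^ p ≤ (‖f‖₊ : ℝ≥0∞) ^ p * ∏ r, (‖m r‖₊ : ℝ≥0∞) ^ p := by
  rw [ENNReal.prod_rpow_of_nonneg hp, ← ENNReal.mul_rpow_of_nonneg _ _ hp]
  gcongr
  exact_mod_cast f.le_opNNNorm m

lemma lintegral_multilinear_apply_rpow_le [MeasurableSpace X] [BorelSpace X] {i : ℕ} {p : ℝ}
    (hp : 0 ≤ p) {ν : Measure (X × (Fin i → X))} {μ₀ : Measure X} {c : ℝ≥0∞}
    (hdom : ∀ A, MeasurableSet A →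
      ∫⁻ z in Prod.fst ⁻¹' A, ∏ r, (‖z.2 r‖₊ : ℝ≥0∞) ^ p ∂ν ≤ c * μ₀ A)
    {G : X → ContinuousMultilinearMap ℝ (fun _ : Fin i => X) Y} (hG : Continuous G) :
    ∫⁻ z, (‖G z.1 z.2‖₊ : ℝ≥0∞) ^ p ∂ν ≤ c * ∫⁻ x, (‖G x‖₊ : ℝ≥0∞) ^ p ∂μ₀ := by
  have hw : Measurable fun z : X × (Fin i → X) => ∏ r, (‖z.2 r‖₊ : ℝ≥0∞) ^ p :=
    Finset.measurable_prod _ fun r _ =>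
      ((measurable_pi_apply r).comp measurable_snd).nnnorm.coe_nnreal_ennreal.pow_const p
  calc ∫⁻ z, (‖G z.1 z.2‖₊ : ℝ≥0∞) ^ p ∂ν
      ≤ ∫⁻ z, (‖G z.1‖₊ : ℝ≥0∞) ^ p * ∏ r, (‖z.2 r‖₊ : ℝ≥0∞) ^ p ∂ν :=
        lintegral_mono fun z => (G z.1).nnnorm_apply_rpow_le hp z.2
    _ ≤ c * ∫⁻ x, (‖G x‖₊ : ℝ≥0∞) ^ p ∂μ₀ :=
        lintegral_comp_mul_le_of_setLIntegral_preimage_le measurable_fst hw hdom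
          (hG.nnnorm.measurable.coe_nnreal_ennreal.pow_const p)

lemma lintegral_marginalUpTo_iteratedFDeriv_zero [MeasurableSpace X] [BorelSpace X] {k : ℕ}
    (p : ℝ) (μ : Measure (X × (Fin k → X))) {F : X → Y} (hF : Continuous F) :
    ∫⁻ z, (‖iteratedFDeriv ℝ 0 F z.1 z.2‖₊ : ℝ≥0∞) ^ p ∂(marginalUpTo μ 0 k.zero_le) =
      ∫⁻ x, (‖iteratedFDeriv ℝ 0 F x‖₊ : ℝ≥0∞) ^ p ∂(μ.map Prod.fst) := by
  have hnorm (x : X) : ‖iteratedFDeriv ℝ 0 F x‖₊ = ‖F x‖₊ :=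
    NNReal.coe_injective (norm_iteratedFDeriv_zero (𝕜 := ℝ))
  simp only [iteratedFDeriv_zero_apply, hnorm]
  exact lintegral_marginalUpTo_comp_fst μ _ (hF.nnnorm.measurable.coe_nnreal_ennreal.pow_const p)

end NormedSpaces

theorem stmt_6_general {X Y : Type*} [NormedAddCommGroup X] [NormedSpace ℝ X]
    [NormedAddCommGroup Y] [NormedSpace ℝ Y]
    [MeasurableSpace X] [BorelSpace X]
    (k : ℕ) (p : ℝ) (hp : 1 ≤ p)
    (μ : Measure (X × (Fin k → X)))
    (C : ℕ → ℝ)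
    (hRNdom : ∀ i, 1 ≤ i → ∀ hik : i ≤ k, ∀ A : Set X, MeasurableSet A →
      ∫⁻ z in Prod.fst ⁻¹' A, ∏ r, (‖z.2 r‖₊ : ℝ≥0∞) ^ p ∂(marginalUpTo μ i hik) ≤
        ENNReal.ofReal (C i) * (μ.map Prod.fst) A)
    (F : X → Y) (hF : ContDiff ℝ k F) :
    (∀ i, 1 ≤ i → ∀ hik : i ≤ k,
      ∫⁻ z, (‖iteratedFDeriv ℝ i F z.1 z.2‖₊ : ℝ≥0∞) ^ p ∂(marginalUpTo μ i hik) ≤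
        ENNReal.ofReal (C i) *
          ∫⁻ x, (‖iteratedFDeriv ℝ i F x‖₊ : ℝ≥0∞) ^ p ∂(μ.map Prod.fst)) ∧
    (⨆ i : Fin (k + 1),
        ∫⁻ z, (‖iteratedFDeriv ℝ (i : ℕ) F z.1 z.2‖₊ : ℝ≥0∞) ^ p
          ∂(marginalUpTo μ (i : ℕ) i.is_le)) ≤
      max 1 ((Finset.Icc 1 k).sup fun i => ENNReal.ofReal (C i)) *
        ⨆ i : Fin (k + 1),
          ∫⁻ x, (‖iteratedFDeriv ℝ (i : ℕ) F x‖₊ : ℝ≥0∞) ^ p ∂(μ.map Prod.fst) := by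
  have hbound (i : ℕ) (hi : 1 ≤ i) (hik : i ≤ k) := lintegral_multilinear_apply_rpow_le
    (by linarith) (hRNdom i hi hik) (hF.continuous_iteratedFDeriv (mod_cast hik))
  set M := max 1 ((Finset.Icc 1 k).sup fun i => ENNReal.ofReal (C i))
  have hbound_M (i : ℕ) (hik : i ≤ k) :
      ∫⁻ z, (‖iteratedFDeriv ℝ i F z.1 z.2‖₊ : ℝ≥0∞) ^ p ∂(marginalUpTo μ i hik) ≤
        M * ∫⁻ x, (‖iteratedFDeriv ℝ i F x‖₊ : ℝ≥0∞) ^ p ∂(μ.map Prod.fst) := by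
    rcases Nat.eq_zero_or_pos i with rfl | hi
    · rw [lintegral_marginalUpTo_iteratedFDeriv_zero p μ hF.continuous]
      exact le_mul_of_one_le_left zero_le (le_max_left _ _)
    · have hCM : ENNReal.ofReal (C i) ≤ M :=
        (Finset.le_sup (f := fun i => ENNReal.ofReal (C i)) (Finset.mem_Icc.mpr ⟨hi, hik⟩)).trans
          (le_max_right _ _)
      exact (hbound i hi hik).trans (mul_le_mul_left hCM _)
  exact ⟨hbound, iSup_le fun i =>
    (hbound_M i i.is_le).trans (mul_le_mul_right (le_iSup_of_le i le_rfl) M)⟩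

/-- under the Radon–Nikodym domination assumption with constants `C i`,
for every `C^k` map `F` and `1 ≤ i ≤ k`,
`∫_{X×X^i} ‖D^iF(x)(h^1,…,h^i)‖^p dμ^{0:i} ≤ C_i ∫_X ‖D^iF(x)‖^p dμ^0`;
consequently `‖F‖_{W^{k,p}_{B,μ}}^p ≤ max(1, C_1, …, C_k) · ‖F‖_{W^{k,p}_{μ^0}}^p`. -/
theorem stmt_6 {X Y : Type*} [NormedAddCommGroup X] [NormedSpace ℝ X] [CompleteSpace X]
    [NormedAddCommGroup Y] [NormedSpace ℝ Y] [CompleteSpace Y]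
    [MeasurableSpace X] [BorelSpace X]
    (k : ℕ) (p : ℝ) (hp : 1 ≤ p)
    (μ : Measure (X × (Fin k → X))) [IsFiniteMeasure μ]
    (C : ℕ → ℝ) (hCpos : ∀ i, 1 ≤ i → i ≤ k → 0 < C i)
    (hRNfin : ∀ i, 1 ≤ i → ∀ hik : i ≤ k,
      ∫⁻ z, ∏ r, (‖z.2 r‖₊ : ℝ≥0∞) ^ p ∂(marginalUpTo μ i hik) < ⊤)
    (hRNdom : ∀ i, 1 ≤ i → ∀ hik : i ≤ k, ∀ A : Set X, MeasurableSet A →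
      ∫⁻ z in Prod.fst ⁻¹' A, ∏ r, (‖z.2 r‖₊ : ℝ≥0∞) ^ p ∂(marginalUpTo μ i hik) ≤
        ENNReal.ofReal (C i) * (μ.map Prod.fst) A)
    (F : X → Y) (hF : ContDiff ℝ k F) :
    (∀ i, 1 ≤ i → ∀ hik : i ≤ k,
      ∫⁻ z, (‖iteratedFDeriv ℝ i F z.1 z.2‖₊ : ℝ≥0∞) ^ p ∂(marginalUpTo μ i hik) ≤
        ENNReal.ofReal (C i) *
          ∫⁻ x, (‖iteratedFDeriv ℝ i F x‖₊ : ℝ≥0∞) ^ p ∂(μ.map Prod.fst)) ∧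
    (⨆ i : Fin (k + 1),
        ∫⁻ z, (‖iteratedFDeriv ℝ (i : ℕ) F z.1 z.2‖₊ : ℝ≥0∞) ^ p
          ∂(marginalUpTo μ (i : ℕ) i.is_le)) ≤
      max 1 ((Finset.Icc 1 k).sup fun i => ENNReal.ofReal (C i)) *
        ⨆ i : Fin (k + 1),
          ∫⁻ x, (‖iteratedFDeriv ℝ (i : ℕ) F x‖₊ : ℝ≥0∞) ^ p ∂(μ.map Prod.fst) :=
  stmt_6_general k p hp μ C hRNdom F hF
end

section
/- Let N, N', k ∈ ℕ, p ≥ 1, and let η be a Borel probability measure on (ℝ^N)^k such that ∫ ∏_{j=1}^k (1 + ‖h^j‖^p) dη(h^1, …, h^k) < ∞, and such that for each 1 ≤ i ≤ k and every continuous i-multilinear map L : (ℝ^N)^i → ℝ^{N'}, if ∫ ‖L(h^1, …, h^i)‖^p dη^{1:i}(h^1, …, h^i) = 0 then L = 0, where η^{1:i} denotes the marginal of η on (ℝ^N)^i. Then there exists a constant C > 0, depending only on N, N', k, p and η, such that for every finite Borel measure μ^0 on ℝ^N and every k-times continuously differentiable F : ℝ^N → ℝ^{N'}: ‖F‖_{W^{k,p}_{μ^0}}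 ≤ C · ‖F‖_{W^{k,p}_{B, μ^0 ⊗ η}}. -/
open MeasureTheory
open scoped Topology ENNReal NNReal

lemma stmt7_key (N N' i : ℕ) (p : ℝ) (hp : 1 ≤ p)
    (ν : Measure (Fin i → (Fin N → ℝ)))
    (M : ℝ≥0∞) (hM : M ≠ ⊤)
    (hfin : ∀ L : ContinuousMultilinearMap ℝ (fun _ : Fin i => (Fin N → ℝ)) (Fin N' → ℝ),
      ∫⁻ h, (‖L h‖₊ : ℝ≥0∞) ^ p ∂ν ≤ (‖L‖₊ : ℝ≥0∞) ^ p * M)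
    (hnd : ∀ L : ContinuousMultilinearMap ℝ (fun _ : Fin i => (Fin N → ℝ)) (Fin N' → ℝ),
      ∫⁻ h, (‖L h‖₊ : ℝ≥0∞) ^ p ∂ν = 0 → L = 0) :
    ∃ c : ℝ, 0 < c ∧ ∀ L : ContinuousMultilinearMap ℝ (fun _ : Fin i => (Fin N → ℝ)) (Fin N' → ℝ),
      (‖L‖₊ : ℝ≥0∞) ^ p ≤ ENNReal.ofReal c * ∫⁻ h, (‖L h‖₊ : ℝ≥0∞) ^ p ∂ν := by
  have hp0 : (0:ℝ) < p := lt_of_lt_of_le one_pos hp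
  set E := ContinuousMultilinearMap ℝ (fun _ : Fin i => (Fin N → ℝ)) (Fin N' → ℝ) with hE
  haveI : FiniteDimensional ℝ E :=
    FiniteDimensional.of_injective
      (ContinuousMultilinearMap.toMultilinearMapLinear (R' := ℝ))
      (fun L L' h => ContinuousMultilinearMap.toMultilinearMap_injective h)
  set I : E → ℝ≥0∞ := fun L => ∫⁻ h, (‖L h‖₊ : ℝ≥0∞) ^ p ∂ν with hI
  have hmeas : ∀ L : E, Measurable fun h => (‖L h‖₊ : ℝ≥0∞) ^ p := fun L =>
    ((ENNReal.continuous_rpow_const.comp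
      (ENNReal.continuous_coe.comp L.cont.nnnorm)).measurable)
  have hIfin : ∀ L : E, I L ≠ ⊤ := fun L =>
    ne_top_of_le_ne_top (ENNReal.mul_ne_top
      (ENNReal.rpow_ne_top_of_nonneg hp0.le ENNReal.coe_ne_top) hM) (hfin L)
  have htri : ∀ L L' : E, I L ^ (1/p) ≤ I L' ^ (1/p) + I (L - L') ^ (1/p) := by
    intro L L'
    calc I L ^ (1/p)
        ≤ (∫⁻ h, ((‖L' h‖₊ : ℝ≥0∞) + (‖(L - L') h‖₊ : ℝ≥0∞)) ^ p ∂ν) ^ (1/p) := by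
          apply ENNReal.rpow_le_rpow _ (by positivity)
          apply lintegral_mono
          intro h
          apply ENNReal.rpow_le_rpow _ hp0.le
          have e : L h = L' h + (L - L') h := by
            rw [ContinuousMultilinearMap.sub_apply]; abel
          rw [e]
          exact_mod_cast nnnorm_add_le _ _
      _ ≤ I L' ^ (1/p) + I (L - L') ^ (1/p) :=
          ENNReal.lintegral_Lp_add_le
            ((ENNReal.continuous_coe.comp L'.cont.nnnorm).measurable.aemeasurable)
            ((ENNReal.continuous_coe.comp (L - L').cont.nnnorm).measurable.aemeasurable) hp
  have hsmall : ∀ L : E, I L ^ (1/p) ≤ M ^ (1/p) * (‖L‖₊ : ℝ≥0∞) := by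
    intro L
    calc I L ^ (1/p) ≤ ((‖L‖₊ : ℝ≥0∞) ^ p * M) ^ (1/p) :=
          ENNReal.rpow_le_rpow (hfin L) (by positivity)
      _ = (‖L‖₊ : ℝ≥0∞) * M ^ (1/p) := by
          rw [ENNReal.mul_rpow_of_nonneg _ _ (by positivity), ← ENNReal.rpow_mul,
            mul_one_div, div_self hp0.ne', ENNReal.rpow_one]
      _ = M ^ (1/p) * (‖L‖₊ : ℝ≥0∞) := mul_comm _ _
  have hIrtop : ∀ L : E, I L ^ (1/p) ≠ ⊤ := fun L =>
    ENNReal.rpow_ne_top_of_nonneg (by positivity) (hIfin L)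
  set φ : E → ℝ := fun L => (I L ^ (1/p)).toReal with hφ
  have hφsub : ∀ L L' : E, φ L - φ L' ≤ (M ^ (1/p)).toReal * ‖L - L'‖ := by
    intro L L'
    have h1 : φ L ≤ φ L' + (I (L - L') ^ (1/p)).toReal := by
      rw [← ENNReal.toReal_add (hIrtop L') (hIrtop (L - L'))]
      exact ENNReal.toReal_mono (by
        exact ENNReal.add_ne_top.2 ⟨hIrtop L', hIrtop (L - L')⟩) (htri L L')
    have h2 : (I (L - L') ^ (1/p)).toReal ≤ (M ^ (1/p)).toReal * ‖L - L'‖ := by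
      have := ENNReal.toReal_mono (ENNReal.mul_ne_top
        (ENNReal.rpow_ne_top_of_nonneg (by positivity) hM) ENNReal.coe_ne_top)
        (hsmall (L - L'))
      rwa [ENNReal.toReal_mul, ENNReal.coe_toReal, coe_nnnorm] at this
    linarith
  have hcont : Continuous φ := by
    apply LipschitzWith.continuous (K := (M ^ (1/p)).toNNReal)
    apply LipschitzWith.of_dist_le_mul
    intro L L'
    rw [Real.dist_eq, abs_sub_le_iff, dist_eq_norm]
    have hKr : (((M ^ (1/p)).toNNReal : ℝ≥0) : ℝ) = (M ^ (1/p)).toReal := rfl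
    rw [hKr]
    refine ⟨hφsub L L', ?_⟩
    rw [norm_sub_rev]
    exact hφsub L' L
  by_cases hEtriv : ∀ L : E, L = 0
  · refine ⟨1, one_pos, fun L => ?_⟩
    rw [hEtriv L]
    simp [ENNReal.zero_rpow_of_pos hp0]
  · push_neg at hEtriv
    obtain ⟨L₁, hL₁⟩ := hEtriv
    have hsph : (Metric.sphere (0:E) 1).Nonempty := by
      refine ⟨‖L₁‖⁻¹ • L₁, mem_sphere_zero_iff_norm.2 ?_⟩
      rw [norm_smul ‖L₁‖⁻¹ L₁, norm_inv, norm_norm, inv_mul_cancel₀ (norm_ne_zero_iff.2 hL₁)]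
    obtain ⟨L₀, hL₀mem, hmin⟩ :=
      (isCompact_sphere (0:E) 1).exists_isMinOn hsph hcont.continuousOn
    have hL₀norm : ‖L₀‖ = 1 := by simpa using hL₀mem
    have hm0 : I L₀ ≠ 0 := by
      intro h
      have : L₀ = 0 := hnd L₀ h
      rw [this] at hL₀norm
      simp at hL₀norm
    have hmtop : I L₀ ≠ ⊤ := hIfin L₀
    refine ⟨((I L₀)⁻¹).toReal, ?_, ?_⟩
    · exact ENNReal.toReal_pos (ENNReal.inv_ne_zero.2 hmtop) (ENNReal.inv_ne_top.2 hm0)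
    · intro L
      by_cases hL : L = 0
      · rw [hL]; simp [ENNReal.zero_rpow_of_pos hp0]
      · have hLn : ‖L‖ ≠ 0 := norm_ne_zero_iff.2 hL
        set u : E := ‖L‖⁻¹ • L with hu
        have humem : u ∈ Metric.sphere (0:E) 1 := by
          refine mem_sphere_zero_iff_norm.2 ?_
          rw [hu, norm_smul ‖L‖⁻¹ L, norm_inv, norm_norm, inv_mul_cancel₀ hLn]
        have hIu : I u = ((‖L‖₊ : ℝ≥0∞)⁻¹) ^ p * I L := by
          rw [hI]
          simp only
          have : ∀ h, (‖u h‖₊ : ℝ≥0∞) ^ p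
              = ((‖L‖₊ : ℝ≥0∞)⁻¹) ^ p * (‖L h‖₊ : ℝ≥0∞) ^ p := by
            intro h
            have : u h = ‖L‖⁻¹ • L h := by
              rw [hu, ContinuousMultilinearMap.smul_apply]
            rw [this, nnnorm_smul, ← ENNReal.mul_rpow_of_nonneg _ _ hp0.le]
            congr 1
            push_cast
            rw [nnnorm_inv, nnnorm_norm, ENNReal.coe_inv (by exact_mod_cast nnnorm_ne_zero_iff.2 hL)]
          simp_rw [this]
          rw [lintegral_const_mul' _ _ (by
            exact ENNReal.rpow_ne_top_of_nonneg hp0.le (ENNReal.inv_ne_top.2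
              (by exact_mod_cast nnnorm_ne_zero_iff.2 hL)))]
        have hle : I L₀ ≤ I u := by
          have := hmin humem
          have h' : I L₀ ^ (1/p) ≤ I u ^ (1/p) :=
            (ENNReal.toReal_le_toReal (hIrtop L₀) (hIrtop u)).1 this
          exact (ENNReal.rpow_le_rpow_iff (by positivity)).1 h'
        rw [hIu] at hle
        have hLnn : (‖L‖₊ : ℝ≥0∞) ≠ 0 := by exact_mod_cast nnnorm_ne_zero_iff.2 hL
        have hLtop : (‖L‖₊ : ℝ≥0∞) ≠ ⊤ := ENNReal.coe_ne_top
        have hpow0 : ((‖L‖₊ : ℝ≥0∞)) ^ p ≠ 0 := by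
          simp [ENNReal.rpow_eq_zero_iff, hLnn, hp0, hp0.not_gt]
        have hpowtop : ((‖L‖₊ : ℝ≥0∞)) ^ p ≠ ⊤ :=
          ENNReal.rpow_ne_top_of_nonneg hp0.le hLtop
        have hmul : (‖L‖₊ : ℝ≥0∞) ^ p * I L₀ ≤ I L := by
          calc (‖L‖₊ : ℝ≥0∞) ^ p * I L₀
              ≤ (‖L‖₊ : ℝ≥0∞) ^ p * (((‖L‖₊ : ℝ≥0∞)⁻¹) ^ p * I L) := by gcongr
            _ = I L := by
                rw [← mul_assoc, ← ENNReal.mul_rpow_of_nonneg _ _ hp0.le,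
                  ENNReal.mul_inv_cancel hLnn hLtop, ENNReal.one_rpow, one_mul]
        rw [ENNReal.ofReal_toReal (ENNReal.inv_ne_top.2 hm0)]
        rw [← ENNReal.le_div_iff_mul_le (Or.inl hm0) (Or.inl hmtop)] at hmul
        rwa [ENNReal.div_eq_inv_mul] at hmul

/-- in finite dimensions, if `η` is a probability measure on `(ℝ^N)^k` with
finite mixed `p`-moments whose marginals are nondegenerate for multilinear maps, then the
operator-norm Sobolev norm is controlled by the weighted Sobolev norm w.r.t. `μ^0 ⊗ η`,
uniformly over all finite input measures `μ^0` and all `C^k` maps `F : ℝ^N → ℝ^{N'}`. -/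
theorem stmt_7 (N N' k : ℕ) (p : ℝ) (hp : 1 ≤ p)
    (η : Measure (Fin k → (Fin N → ℝ))) [IsProbabilityMeasure η]
    (hmom : ∫⁻ h, ∏ j, (1 + (‖h j‖₊ : ℝ≥0∞) ^ p) ∂η < ⊤)
    (hnd : ∀ i, 1 ≤ i → ∀ hik : i ≤ k,
      ∀ L : ContinuousMultilinearMap ℝ (fun _ : Fin i => (Fin N → ℝ)) (Fin N' → ℝ),
        (∫⁻ h, (‖L h‖₊ : ℝ≥0∞) ^ p
            ∂(η.map fun g (j : Fin i) => g (Fin.castLE hik j))) = 0 → L = 0) :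
    ∃ C : ℝ, 0 < C ∧
      ∀ (μ0 : Measure (Fin N → ℝ)), IsFiniteMeasure μ0 →
      ∀ F : (Fin N → ℝ) → (Fin N' → ℝ), ContDiff ℝ k F →
        (⨆ i : Fin (k + 1),
            ∫⁻ x, (‖iteratedFDeriv ℝ (i : ℕ) F x‖₊ : ℝ≥0∞) ^ p ∂μ0) ≤
          ENNReal.ofReal C *
            ⨆ i : Fin (k + 1),
              ∫⁻ x, ∫⁻ h,
                (‖iteratedFDeriv ℝ (i : ℕ) F x
                    (fun j => h (Fin.castLE i.is_le j))‖₊ : ℝ≥0∞) ^ p ∂η ∂μ0 := by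
  have hp0 : (0:ℝ) < p := lt_of_lt_of_le one_pos hp
  have H : ∀ i : Fin (k+1), ∃ c : ℝ, 0 < c ∧
      ∀ L : ContinuousMultilinearMap ℝ (fun _ : Fin (i:ℕ) => (Fin N → ℝ)) (Fin N' → ℝ),
        (‖L‖₊ : ℝ≥0∞) ^ p ≤ ENNReal.ofReal c *
          ∫⁻ h, (‖L h‖₊ : ℝ≥0∞) ^ p
            ∂(η.map fun g (j : Fin (i:ℕ)) => g (Fin.castLE i.is_le j)) := by
    intro i
    have hproj : Measurable fun (g : Fin k → (Fin N → ℝ)) (j : Fin (i:ℕ)) =>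
        g (Fin.castLE i.is_le j) :=
      measurable_pi_lambda _ fun j => measurable_pi_apply _
    apply stmt7_key N N' (i:ℕ) p hp _ (∫⁻ h, ∏ j, (1 + (‖h j‖₊ : ℝ≥0∞) ^ p) ∂η) hmom.ne
    · -- finiteness
      intro L
      have hfm : Measurable fun h : Fin (i:ℕ) → (Fin N → ℝ) => (‖L h‖₊ : ℝ≥0∞) ^ p :=
        (ENNReal.continuous_rpow_const.comp
          (ENNReal.continuous_coe.comp L.cont.nnnorm)).measurable
      rw [lintegral_map hfm hproj]
      calc ∫⁻ g, (‖L fun j => g (Fin.castLE i.is_le j)‖₊ : ℝ≥0∞) ^ p ∂η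
          ≤ ∫⁻ g, (‖L‖₊ : ℝ≥0∞) ^ p * ∏ j, (1 + (‖g j‖₊ : ℝ≥0∞) ^ p) ∂η := by
            apply lintegral_mono
            intro g
            have h1 : (‖L fun j => g (Fin.castLE i.is_le j)‖₊ : ℝ≥0∞)
                ≤ (‖L‖₊ : ℝ≥0∞) * ∏ j : Fin (i:ℕ), (‖g (Fin.castLE i.is_le j)‖₊ : ℝ≥0∞) := by
              have h2 := L.le_opNNNorm fun j => g (Fin.castLE i.is_le j)
              exact_mod_cast h2
            have hprod : (∏ j : Fin (i:ℕ), (‖g (Fin.castLE i.is_le j)‖₊ : ℝ≥0∞) ^ p)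
                ≤ ∏ j : Fin k, (1 + (‖g j‖₊ : ℝ≥0∞) ^ p) := by
              calc ∏ j : Fin (i:ℕ), (‖g (Fin.castLE i.is_le j)‖₊ : ℝ≥0∞) ^ p
                  ≤ ∏ j : Fin (i:ℕ), (1 + (‖g (Fin.castLE i.is_le j)‖₊ : ℝ≥0∞) ^ p) :=
                    Finset.prod_le_prod' fun j _ => le_add_self
                _ = ∏ m ∈ Finset.univ.map (Fin.castLEEmb i.is_le),
                      (1 + (‖g m‖₊ : ℝ≥0∞) ^ p) := by
                    rw [Finset.prod_map]
                    rfl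
                _ ≤ ∏ j : Fin k, (1 + (‖g j‖₊ : ℝ≥0∞) ^ p) :=
                    Finset.prod_le_prod_of_subset_of_one_le' (Finset.subset_univ _)
                      (fun m _ _ => le_self_add)
            calc (‖L fun j => g (Fin.castLE i.is_le j)‖₊ : ℝ≥0∞) ^ p
                ≤ ((‖L‖₊ : ℝ≥0∞) * ∏ j : Fin (i:ℕ),
                    (‖g (Fin.castLE i.is_le j)‖₊ : ℝ≥0∞)) ^ p :=
                  ENNReal.rpow_le_rpow h1 hp0.le
              _ = (‖L‖₊ : ℝ≥0∞) ^ p * ∏ j : Fin (i:ℕ),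
                    (‖g (Fin.castLE i.is_le j)‖₊ : ℝ≥0∞) ^ p := by
                  rw [ENNReal.mul_rpow_of_nonneg _ _ hp0.le,
                    ENNReal.prod_rpow_of_nonneg hp0.le]
              _ ≤ (‖L‖₊ : ℝ≥0∞) ^ p * ∏ j : Fin k, (1 + (‖g j‖₊ : ℝ≥0∞) ^ p) :=
                  mul_le_mul_right hprod _
        _ = (‖L‖₊ : ℝ≥0∞) ^ p * ∫⁻ h, ∏ j, (1 + (‖h j‖₊ : ℝ≥0∞) ^ p) ∂η :=
            lintegral_const_mul' _ _
              (ENNReal.rpow_ne_top_of_nonneg hp0.le ENNReal.coe_ne_top)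
    · -- nondegeneracy
      intro L hL0
      rcases Nat.eq_zero_or_pos (i:ℕ) with h0 | h1
      · haveI hie : IsEmpty (Fin (i:ℕ)) := h0 ▸ inferInstanceAs (IsEmpty (Fin 0))
        haveI := Pi.uniqueOfIsEmpty (fun _ : Fin (i:ℕ) => (Fin N → ℝ))
        haveI : IsProbabilityMeasure
            (η.map fun g (j : Fin (i:ℕ)) => g (Fin.castLE i.is_le j)) :=
          Measure.isProbabilityMeasure_map hproj.aemeasurable
        set h₀ : Fin (i:ℕ) → (Fin N → ℝ) := fun j => isEmptyElim j with hh₀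
        have hconst : (∫⁻ h, (‖L h‖₊ : ℝ≥0∞) ^ p
            ∂(η.map fun g (j : Fin (i:ℕ)) => g (Fin.castLE i.is_le j)))
            = (‖L h₀‖₊ : ℝ≥0∞) ^ p := by
          have heq : (fun h : Fin (i:ℕ) → (Fin N → ℝ) => (‖L h‖₊ : ℝ≥0∞) ^ p)
              = fun _ => (‖L h₀‖₊ : ℝ≥0∞) ^ p := by
            funext h
            rw [Subsingleton.elim h h₀]
          rw [heq, lintegral_const, measure_univ, mul_one]
        rw [hconst] at hL0
        have hn0 : ‖L h₀‖₊ = 0 := by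
          have := (ENNReal.rpow_eq_zero_iff).1 hL0
          rcases this with ⟨h, _⟩ | ⟨h, hcon⟩
          · exact_mod_cast h
          · exact absurd hcon (not_lt.2 hp0.le)
        have hLd : L h₀ = 0 := nnnorm_eq_zero.1 hn0
        apply ContinuousMultilinearMap.ext
        intro m
        rw [Subsingleton.elim m h₀, hLd, ContinuousMultilinearMap.zero_apply]
      · exact hnd _ h1 i.is_le L hL0
  choose c hcpos hcle using H
  refine ⟨∑ i, c i, Finset.sum_pos (fun i _ => hcpos i) Finset.univ_nonempty, ?_⟩
  intro μ0 _ F _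
  apply iSup_le
  intro i
  have hproj : Measurable fun (g : Fin k → (Fin N → ℝ)) (j : Fin (i:ℕ)) =>
      g (Fin.castLE i.is_le j) :=
    measurable_pi_lambda _ fun j => measurable_pi_apply _
  calc ∫⁻ x, (‖iteratedFDeriv ℝ (i:ℕ) F x‖₊ : ℝ≥0∞) ^ p ∂μ0
      ≤ ∫⁻ x, ENNReal.ofReal (c i) * ∫⁻ h,
          (‖iteratedFDeriv ℝ (i:ℕ) F x
            (fun j => h (Fin.castLE i.is_le j))‖₊ : ℝ≥0∞) ^ p ∂η ∂μ0 := by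
        apply lintegral_mono
        intro x
        refine le_trans (hcle i (iteratedFDeriv ℝ (i:ℕ) F x)) (le_of_eq ?_)
        congr 1
        have hfm : Measurable fun h : Fin (i:ℕ) → (Fin N → ℝ) =>
            (‖iteratedFDeriv ℝ (i:ℕ) F x h‖₊ : ℝ≥0∞) ^ p :=
          (ENNReal.continuous_rpow_const.comp
            (ENNReal.continuous_coe.comp
              (iteratedFDeriv ℝ (i:ℕ) F x).cont.nnnorm)).measurable
        rw [lintegral_map hfm hproj]
    _ = ENNReal.ofReal (c i) * ∫⁻ x, ∫⁻ h,
          (‖iteratedFDeriv ℝ (i:ℕ) F x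
            (fun j => h (Fin.castLE i.is_le j))‖₊ : ℝ≥0∞) ^ p ∂η ∂μ0 :=
        lintegral_const_mul' _ _ ENNReal.ofReal_ne_top
    _ ≤ ENNReal.ofReal (∑ j, c j) *
          ⨆ i : Fin (k+1), ∫⁻ x, ∫⁻ h,
            (‖iteratedFDeriv ℝ (i:ℕ) F x
              (fun j => h (Fin.castLE i.is_le j))‖₊ : ℝ≥0∞) ^ p ∂η ∂μ0 := by
        apply mul_le_mul'
        · exact ENNReal.ofReal_le_ofReal
            (Finset.single_le_sum (fun j _ => (hcpos j).le) (Finset.mem_univ i))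
        · exact le_iSup (fun i : Fin (k+1) => ∫⁻ x, ∫⁻ h,
            (‖iteratedFDeriv ℝ (i:ℕ) F x
              (fun j => h (Fin.castLE i.is_le j))‖₊ : ℝ≥0∞) ^ p ∂η ∂μ0) i
end

section
/- Let X be a real Banach space, r ≥ 1 and k ∈ ℕ. Suppose the map g(x) := ‖x‖^r is k-times continuously Fréchet differentiable on X ∖ {0} and there is C_g > 0 with ‖D^i g(x)‖_{L^i(X,ℝ)} ≤ C_g · ‖x‖^{r−i} for all x ≠ 0 and 0 ≤ i ≤ k. Let ψ : ℝ → ℝ be k-times continuously differentiable with ψ(y) = 1 for |y| ≤ 1, ψ(y) = 0 for |y| ≥ 2, and sup_{y ∈ ℝ} |ψ^{(i)}(y)| ≤ C_ψ for all 0 ≤ i ≤ k. For η > 0 define b_η : X → ℝ by b_η(x) := ψ(η^r ‖x‖^r). Then: (i) each b_η is k-times continuously Fréchet differentiable on all of X; (ii) b_η(x) = 1 whenever ‖x‖ ≤ 1/η and b_η(x) = 0 whenever ‖x‖ ≥ 2^{1/r}/η; (iii) there exists C > 0, depending only on k, r, C_g, C_ψ, such that ‖D^i b_η(x)‖_{L^i(X,ℝ)}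 ≤ C · η^i for all x ∈ X, 0 < η ≤ 1 and 0 ≤ i ≤ k. -/
open scoped Topology ENNReal NNReal

set_option maxHeartbeats 1000000

/-- construction of rescaled bump functions on a Banach space whose norm power
`g(x) = ‖x‖^r` is `C^k` away from the origin with the natural derivative bounds: the maps
`b_η(x) = ψ(η^r ‖x‖^r)` are `C^k` on all of `X`, equal `1` on `‖x‖ ≤ 1/η`, vanish for
`‖x‖ ≥ 2^{1/r}/η`, and have derivatives bounded by `C·η^i` for `0 < η ≤ 1`. -/
theorem stmt_8 {X : Type*} [NormedAddCommGroup X] [NormedSpace ℝ X] [CompleteSpace X]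
    (r : ℝ) (hr : 1 ≤ r) (k : ℕ) (Cg Cψ : ℝ)
    (hg : ContDiffOn ℝ k (fun x : X => ‖x‖ ^ r) {(0 : X)}ᶜ)
    (hgb : ∀ x : X, x ≠ 0 → ∀ i ≤ k,
      ‖iteratedFDeriv ℝ i (fun x : X => ‖x‖ ^ r) x‖ ≤ Cg * ‖x‖ ^ (r - (i : ℝ)))
    (ψ : ℝ → ℝ) (hψ : ContDiff ℝ k ψ)
    (hψ1 : ∀ y : ℝ, |y| ≤ 1 → ψ y = 1)
    (hψ0 : ∀ y : ℝ, 2 ≤ |y| → ψ y = 0)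
    (hψb : ∀ i ≤ k, ∀ y : ℝ, ‖iteratedFDeriv ℝ i ψ y‖ ≤ Cψ) :
    (∀ η : ℝ, 0 < η → ContDiff ℝ k (fun x : X => ψ (η ^ r * ‖x‖ ^ r))) ∧
    (∀ η : ℝ, 0 < η → ∀ x : X,
      (‖x‖ ≤ 1 / η → ψ (η ^ r * ‖x‖ ^ r) = 1) ∧
      ((2 : ℝ) ^ (1 / r) / η ≤ ‖x‖ → ψ (η ^ r * ‖x‖ ^ r) = 0)) ∧
    (∃ C : ℝ, 0 < C ∧ ∀ (x : X) (η : ℝ), 0 < η → η ≤ 1 → ∀ i ≤ k,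
      ‖iteratedFDeriv ℝ i (fun x : X => ψ (η ^ r * ‖x‖ ^ r)) x‖ ≤ C * η ^ i) := by
  have hr0 : (0 : ℝ) < r := lt_of_lt_of_le one_pos hr
  set b : X → ℝ := fun x => ψ (‖x‖ ^ r) with hbdef
  have h2r : ((2 : ℝ) ^ (1 / r)) ^ r = 2 := by
    rw [← Real.rpow_mul (by norm_num : (0:ℝ) ≤ 2), one_div_mul_cancel (ne_of_gt hr0),
      Real.rpow_one]
  have hb1 : ∀ x : X, ‖x‖ ≤ 1 → b x = 1 := by
    intro x hx
    apply hψ1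
    rw [abs_of_nonneg (Real.rpow_nonneg (norm_nonneg x) r)]
    exact Real.rpow_le_one (norm_nonneg x) hx hr0.le
  have hb0 : ∀ x : X, 2 ≤ ‖x‖ ^ r → b x = 0 := by
    intro x hx
    apply hψ0
    rwa [abs_of_nonneg (Real.rpow_nonneg (norm_nonneg x) r)]
  -- `b` is `C^k` on all of `X`
  have hb : ContDiff ℝ k b := by
    rw [contDiff_iff_contDiffAt]
    intro x
    rcases lt_or_ge ‖x‖ 1 with hx | hx
    · have hev : b =ᶠ[𝓝 x] fun _ => (1 : ℝ) := by
        filter_upwards [Metric.isOpen_ball.mem_nhds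
          (show x ∈ Metric.ball (0 : X) 1 by simpa using hx)] with y hy
        exact hb1 y (le_of_lt (by simpa using hy))
      exact (contDiffAt_const (c := (1 : ℝ))).congr_of_eventuallyEq hev
    · have hx0 : x ≠ 0 := by
        intro h
        rw [h, norm_zero] at hx
        linarith
      exact (hψ.comp_contDiffOn hg).contDiffAt (isOpen_compl_singleton.mem_nhds hx0)
  -- lower bound on `Cψ`
  have hCψ : (1 : ℝ) ≤ Cψ := by
    have h := hψb 0 (Nat.zero_le k) 0
    rw [norm_iteratedFDeriv_zero] at h
    have h1 : ψ 0 = 1 := hψ1 0 (by norm_num)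
    rw [h1] at h
    simpa using h
  set D : ℝ := max 1 (Cg * 2 ^ (r : ℝ)) with hDdef
  have hD1 : (1 : ℝ) ≤ D := le_max_left _ _
  set C : ℝ := (Nat.factorial k : ℝ) * Cψ * D ^ k with hCdef
  have hfact : (1 : ℝ) ≤ (Nat.factorial k : ℝ) := by exact_mod_cast Nat.one_le_iff_ne_zero.mpr k.factorial_ne_zero
  have hDk : (1 : ℝ) ≤ D ^ k := one_le_pow₀ hD1
  have hC1 : (1 : ℝ) ≤ C := by
    calc (1 : ℝ) = 1 * 1 * 1 := by ring
      _ ≤ (Nat.factorial k : ℝ) * Cψ * D ^ k := by gcongr <;> linarith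
  -- uniform bound for derivatives of `b`
  have hbbound : ∀ (x : X) (i : ℕ), i ≤ k → ‖iteratedFDeriv ℝ i b x‖ ≤ C := by
    intro x i hik
    rcases lt_or_ge ‖x‖ 1 with hx | hx
    · have hev : b =ᶠ[𝓝 x] fun _ => (1 : ℝ) := by
        filter_upwards [Metric.isOpen_ball.mem_nhds
          (show x ∈ Metric.ball (0 : X) 1 by simpa using hx)] with y hy
        exact hb1 y (le_of_lt (by simpa using hy))
      have heq : iteratedFDeriv ℝ i b x = iteratedFDeriv ℝ i (fun _ => (1 : ℝ)) x := by
        simp only [← iteratedFDerivWithin_univ]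
        exact Filter.EventuallyEq.iteratedFDerivWithin_eq
          (by simpa [nhdsWithin_univ] using hev) (hev.self_of_nhds) i
      rw [heq]
      rcases Nat.eq_zero_or_pos i with hi | hi
      · subst hi
        rw [norm_iteratedFDeriv_zero]
        simpa using hC1
      · rw [iteratedFDeriv_const_of_ne (Nat.pos_iff_ne_zero.mp hi)]
        simp only [Pi.zero_apply, norm_zero]
        linarith
    rcases lt_or_ge ((2 : ℝ) ^ (1 / r)) ‖x‖ with hx2 | hx2
    · -- `b` vanishes near `x`
      have hopen : IsOpen {y : X | (2 : ℝ) ^ (1 / r) < ‖y‖} :=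
        isOpen_lt continuous_const continuous_norm
      have hev : b =ᶠ[𝓝 x] fun _ => (0 : ℝ) := by
        filter_upwards [hopen.mem_nhds hx2] with y hy
        apply hb0
        have h1 : ((2 : ℝ) ^ (1 / r)) ^ r < ‖y‖ ^ r :=
          Real.rpow_lt_rpow (Real.rpow_nonneg (by norm_num) _) hy hr0
        rw [h2r] at h1
        exact h1.le
      have heq : iteratedFDeriv ℝ i b x = iteratedFDeriv ℝ i (fun _ => (0 : ℝ)) x := by
        simp only [← iteratedFDerivWithin_univ]
        exact Filter.EventuallyEq.iteratedFDerivWithin_eq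
          (by simpa [nhdsWithin_univ] using hev) (hev.self_of_nhds) i
      rw [heq, iteratedFDeriv_zero_fun]
      simp only [Pi.zero_apply, norm_zero]
      linarith
    · -- intermediate region: use the composition bound
      have hx0 : x ≠ 0 := norm_pos_iff.mp (lt_of_lt_of_le one_pos hx)
      have hxmem : x ∈ ({(0 : X)}ᶜ : Set X) := hx0
      have hCg0 : 0 ≤ Cg := by
        have hp : (0 : ℝ) < ‖x‖ ^ (r - ((0 : ℕ) : ℝ)) :=
          Real.rpow_pos_of_pos (norm_pos_iff.mpr hx0) _
        have h := le_trans (norm_nonneg _) (hgb x hx0 0 (Nat.zero_le k))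
        exact (mul_nonneg_iff_of_pos_right hp).mp h
      have hxle2 : ‖x‖ ≤ 2 := by
        refine le_trans hx2 ?_
        calc (2 : ℝ) ^ (1 / r) ≤ (2 : ℝ) ^ (1 : ℝ) :=
              Real.rpow_le_rpow_of_exponent_le one_le_two ((div_le_one hr0).mpr hr)
          _ = 2 := Real.rpow_one 2
      have hxrle : ‖x‖ ^ (r : ℝ) ≤ 2 ^ (r : ℝ) :=
        Real.rpow_le_rpow (norm_nonneg x) hxle2 hr0.le
      have hopen : IsOpen ({(0 : X)}ᶜ : Set X) := isOpen_compl_singleton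
      have key := norm_iteratedFDerivWithin_comp_le (𝕜 := ℝ) (g := ψ)
        (f := fun x : X => ‖x‖ ^ r) (n := i) (s := ({(0 : X)}ᶜ : Set X))
        (t := (Set.univ : Set ℝ))         hψ.contDiffOn hg (by exact_mod_cast hik) uniqueDiffOn_univ hopen.uniqueDiffOn
        (Set.mapsTo_univ _ _) hxmem (C := Cψ) (D := D)
        (fun j hj => by
          rw [iteratedFDerivWithin_univ]
          exact hψb j (le_trans hj hik) _)
        (fun j hj1 hj2 => by
          rw [iteratedFDerivWithin_of_isOpen j hopen hxmem]
          refine le_trans (hgb x hx0 j (le_trans hj2 hik)) ?_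
          have h1 : ‖x‖ ^ (r - (j : ℝ)) = ‖x‖ ^ (r : ℝ) / ‖x‖ ^ ((j : ℕ) : ℝ) :=
            Real.rpow_sub (norm_pos_iff.mpr hx0) _ _
          have h2 : (1 : ℝ) ≤ ‖x‖ ^ ((j : ℕ) : ℝ) := by
            calc (1 : ℝ) = ‖x‖ ^ (0 : ℝ) := (Real.rpow_zero _).symm
              _ ≤ ‖x‖ ^ ((j : ℕ) : ℝ) :=
                  Real.rpow_le_rpow_of_exponent_le hx (by positivity)
          have h3 : ‖x‖ ^ (r - (j : ℝ)) ≤ 2 ^ (r : ℝ) := by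
            rw [h1]
            calc ‖x‖ ^ (r : ℝ) / ‖x‖ ^ ((j : ℕ) : ℝ) ≤ 2 ^ (r : ℝ) / 1 :=
                  div_le_div₀ (by positivity) hxrle one_pos h2
              _ = 2 ^ (r : ℝ) := div_one _
          calc Cg * ‖x‖ ^ (r - (j : ℝ)) ≤ Cg * 2 ^ (r : ℝ) :=
                mul_le_mul_of_nonneg_left h3 hCg0
            _ ≤ D := le_max_right _ _
            _ ≤ D ^ j := le_self_pow₀ hD1 (Nat.one_le_iff_ne_zero.mp hj1))
      have heq : iteratedFDeriv ℝ i b x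
          = iteratedFDerivWithin ℝ i (ψ ∘ fun x : X => ‖x‖ ^ r) ({(0 : X)}ᶜ) x :=
        (iteratedFDerivWithin_of_isOpen i hopen hxmem).symm
      rw [heq]
      refine le_trans key ?_
      have hCψ0 : (0 : ℝ) ≤ Cψ := le_trans zero_le_one hCψ
      have hfle : ((Nat.factorial i : ℕ) : ℝ) ≤ ((Nat.factorial k : ℕ) : ℝ) := by
        exact_mod_cast Nat.factorial_le hik
      have hDle : D ^ i ≤ D ^ k := pow_le_pow_right₀ hD1 hik
      calc (Nat.factorial i : ℝ) * Cψ * D ^ i ≤ (Nat.factorial k : ℝ) * Cψ * D ^ k := by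
            apply mul_le_mul (mul_le_mul hfle le_rfl hCψ0 (by positivity)) hDle
              (by positivity) (by positivity)
        _ = C := rfl
  -- the scaling identity
  have key : ∀ η : ℝ, 0 < η →
      (fun x : X => ψ (η ^ r * ‖x‖ ^ r)) = b ∘ ⇑(η • ContinuousLinearMap.id ℝ X) := by
    intro η hη
    funext x
    simp only [Function.comp_apply, ContinuousLinearMap.smul_apply,
      ContinuousLinearMap.id_apply, hbdef]
    congr 1
    rw [norm_smul, Real.norm_eq_abs, abs_of_pos hη,
      Real.mul_rpow hη.le (norm_nonneg x)]
  refine ⟨?_, ?_, ?_⟩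
  · intro η hη
    rw [key η hη]
    exact hb.comp (η • ContinuousLinearMap.id ℝ X).contDiff
  · intro η hη x
    constructor
    · intro h
      apply hψ1
      rw [← Real.mul_rpow hη.le (norm_nonneg x),
        abs_of_nonneg (Real.rpow_nonneg (by positivity) _)]
      apply Real.rpow_le_one (by positivity) ?_ hr0.le
      calc η * ‖x‖ ≤ η * (1 / η) := by
            apply mul_le_mul_of_nonneg_left h hη.le
        _ = 1 := by field_simp
    · intro h
      apply hψ0
      rw [← Real.mul_rpow hη.le (norm_nonneg x),
        abs_of_nonneg (Real.rpow_nonneg (by positivity) _)]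
      have h2 : (2 : ℝ) ^ (1 / r) ≤ η * ‖x‖ := by
        rw [div_le_iff₀ hη] at h
        linarith [mul_comm ‖x‖ η]
      calc (2 : ℝ) = ((2 : ℝ) ^ (1 / r)) ^ r := h2r.symm
        _ ≤ (η * ‖x‖) ^ r :=
            Real.rpow_le_rpow (Real.rpow_nonneg (by norm_num) _) h2 hr0.le
  · refine ⟨C, lt_of_lt_of_le one_pos hC1, ?_⟩
    intro x η hη hη1 i hik
    rw [key η hη]
    set L : X →L[ℝ] X := η • ContinuousLinearMap.id ℝ X with hLdef
    rw [L.iteratedFDeriv_comp_right hb x (by exact_mod_cast hik)]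
    refine le_trans (ContinuousMultilinearMap.norm_compContinuousLinearMap_le _ _) ?_
    have hL : ‖L‖ ≤ η := by
      refine ContinuousLinearMap.opNorm_le_bound L hη.le fun y => ?_
      rw [hLdef]
      simp only [ContinuousLinearMap.smul_apply, ContinuousLinearMap.id_apply]
      rw [norm_smul, Real.norm_eq_abs, abs_of_pos hη]
    have h2 : (∏ _j : Fin i, ‖L‖) ≤ η ^ i := by
      rw [Finset.prod_const, Finset.card_univ, Fintype.card_fin]
      exact pow_le_pow_left₀ (norm_nonneg _) hL i
    exact mul_le_mul (hbbound (L x) i hik) h2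
      (Finset.prod_nonneg fun _ _ => norm_nonneg _) (le_trans zero_le_one hC1)
end

section
/- Let X and Y be separable real Banach spaces satisfying the bounded approximation property witnessed by sequences (S_d)_{d∈ℕ} of finite-rank continuous linear operators on X and (T_m)_{m∈ℕ} of finite-rank continuous linear operators on Y with S_d x → x for all x ∈ X, T_m y → y for all y ∈ Y, and sup_d ‖S_d‖ ≤ λ, sup_m ‖T_m‖ ≤ λ. Let k ∈ ℕ, p ≥ 1, q ≥ 0, and let μ be a finite Borel measure on X × X^k with ‖μ‖_{k,q,p} := ∫_{X×X^k} (1 + ‖x‖^q) ∏_{j=1}^k (1 + ‖h^j‖^p) dμ < ∞. Let F : X → Y be k-times continuously Fréchet differentiable with a constant C_F such that ‖D^i F(x)‖_{L^i(X,Y)}^p ≤ C_F (1 + ‖x‖^q) for all x ∈ X and 0 ≤ i ≤ k. Then for every ε > 0 there exist d₀, m₀ ∈ ℕ such that for all d ≥ d₀ and m ≥ m₀: max_{0 ≤ i ≤ k} ∫_{X × X^i} ‖D^i F(x)(h^1, …, h^i) − T_m(D^i F(S_d x)(S_d h^1, …, S_d h^i))‖_Y^p dμ^{0:i} < ε^p;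 that is, the cylindrical approximations F_{d,m} := T_m ∘ F ∘ S_d converge to F in the weighted Sobolev norm ‖·‖_{W^{k,p}_{B,μ}}. -/
open MeasureTheory Filter
open scoped Topology ENNReal NNReal

theorem mul_one_add_rpow_le_of_le_mul {C q L a b : ℝ} (hC : 0 ≤ C) (hq : 0 ≤ q) (hL : 1 ≤ L)
    (ha : 0 ≤ a) (hab : a ≤ L * b) : C * (1 + a ^ q) ≤ C * L ^ q * (1 + b ^ q) := by
  have hb : 0 ≤ b := nonneg_of_mul_nonneg_right (ha.trans hab) (by linarith)
  have hLq : 1 ≤ L ^ q := Real.one_le_rpow hL hq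
  have haq : a ^ q ≤ L ^ q * b ^ q := by
    rw [← Real.mul_rpow (by linarith) hb]
    exact Real.rpow_le_rpow ha hab hq
  have hbq : 0 ≤ b ^ q := Real.rpow_nonneg hb q
  rw [mul_assoc]
  gcongr
  nlinarith

section MomentWeight

variable {X : Type*} [NormedAddCommGroup X]

/-- The integrand of `‖μ‖_{n,q,p}`. -/
noncomputable def momentWeight (p q : ℝ) {n : ℕ} (z : X × (Fin n → X)) : ℝ≥0∞ :=
  ENNReal.ofReal (1 + ‖z.1‖ ^ q) * ∏ j, (1 + (‖z.2 j‖₊ : ℝ≥0∞) ^ p)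

theorem ofReal_mul_prod_eq_momentWeight {p : ℝ} (hp : 0 ≤ p) (q : ℝ) {n : ℕ} (x : X)
    (h : Fin n → X) :
    ENNReal.ofReal ((1 + ‖x‖ ^ q) * ∏ j, (1 + ‖h j‖ ^ p)) = momentWeight p q (x, h) := by
  have hx : 0 ≤ 1 + ‖x‖ ^ q := by positivity
  rw [momentWeight, ENNReal.ofReal_mul hx, ENNReal.ofReal_prod_of_nonneg fun j _ => by positivity]
  congr 1
  refine Finset.prod_congr rfl fun j _ => ?_
  rw [ENNReal.ofReal_add zero_le_one (by positivity), ENNReal.ofReal_one,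
    ← ENNReal.ofReal_rpow_of_nonneg (norm_nonneg _) hp, ofReal_norm, enorm_eq_nnnorm]

theorem momentWeight_castLE_le (p q : ℝ) {i k : ℕ} (hik : i ≤ k) (z : X × (Fin k → X)) :
    momentWeight p q (z.1, fun j => z.2 (Fin.castLE hik j)) ≤ momentWeight p q z := by
  refine mul_le_mul_right ?_ _
  calc ∏ j : Fin i, (1 + (‖z.2 (Fin.castLE hik j)‖₊ : ℝ≥0∞) ^ p)
      = ∏ j ∈ Finset.univ.map (Fin.castLEEmb hik), (1 + (‖z.2 j‖₊ : ℝ≥0∞) ^ p) := by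
        rw [Finset.prod_map]; rfl
    _ ≤ ∏ j, (1 + (‖z.2 j‖₊ : ℝ≥0∞) ^ p) :=
        Finset.prod_le_univ_prod_of_one_le' fun _ => le_self_add

theorem lintegral_momentWeight_marginalUpTo_le [MeasurableSpace X] (p q : ℝ) {k : ℕ}
    (μ : Measure (X × (Fin k → X))) (i : ℕ) (hik : i ≤ k) :
    ∫⁻ z, momentWeight p q z ∂(marginalUpTo μ i hik) ≤ ∫⁻ z, momentWeight p q z ∂μ :=
  (lintegral_map_le _ _).trans (lintegral_mono (momentWeight_castLE_le p q hik))

end MomentWeight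

section Operators

variable {X Y : Type*} [NormedAddCommGroup X] [NormedSpace ℝ X]
  [NormedAddCommGroup Y] [NormedSpace ℝ Y]

theorem ContinuousMultilinearMap.norm_apply_sub_apply_comp_le {n : ℕ}
    (A B : ContinuousMultilinearMap ℝ (fun _ : Fin n => X) Y) (T : Y →L[ℝ] Y) (S : X →L[ℝ] X)
    (h : Fin n → X) :
    ‖A h - T (B fun j => S (h j))‖ ≤ (‖A‖ + ‖T‖ * ‖B‖ * ‖S‖ ^ n) * ∏ j, ‖h j‖ := by
  have hB : ‖B fun j => S (h j)‖ ≤ ‖B‖ * ‖S‖ ^ n * ∏ j, ‖h j‖ := by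
    calc ‖B fun j => S (h j)‖ = ‖B.compContinuousLinearMap (fun _ => S) h‖ := rfl
      _ ≤ ‖B.compContinuousLinearMap (fun _ => S)‖ * ∏ j, ‖h j‖ := le_opNorm _ h
      _ ≤ ‖B‖ * ‖S‖ ^ n * ∏ j, ‖h j‖ := by
        gcongr
        simpa using norm_compContinuousLinearMap_le B fun _ : Fin n => S
  calc ‖A h - T (B fun j => S (h j))‖ ≤ ‖A h‖ + ‖T‖ * ‖B fun j => S (h j)‖ :=
        (norm_sub_le _ _).trans (add_le_add_right (T.le_opNorm _) _)
    _ ≤ ‖A‖ * ∏ j, ‖h j‖ + ‖T‖ * (‖B‖ * ‖S‖ ^ n * ∏ j, ‖h j‖) := by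
        gcongr
        exact A.le_opNorm h
    _ = (‖A‖ + ‖T‖ * ‖B‖ * ‖S‖ ^ n) * ∏ j, ‖h j‖ := by ring

theorem norm_apply_sub_apply_comp_rpow_le {n : ℕ}
    (G : X → ContinuousMultilinearMap ℝ (fun _ : Fin n => X) Y) {p q C L : ℝ}
    (hp : 0 ≤ p) (hq : 0 ≤ q) (hG : ∀ y, ‖G y‖ ^ p ≤ C * (1 + ‖y‖ ^ q))
    (hL : 1 ≤ L) {T : Y →L[ℝ] Y} {S : X →L[ℝ] X} (hT : ‖T‖ ≤ L) (hS : ‖S‖ ≤ L)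
    (x : X) (h : Fin n → X) :
    ‖G x h - T (G (S x) fun j => S (h j))‖ ^ p
      ≤ (1 + L ^ (n + 1)) ^ p * (C * L ^ q) * ((1 + ‖x‖ ^ q) * ∏ j, (1 + ‖h j‖ ^ p)) := by
  have hC : 0 ≤ C := nonneg_of_mul_nonneg_left ((Real.rpow_nonneg (norm_nonneg _) p).trans (hG 0))
    (by positivity)
  set M := max ‖G x‖ ‖G (S x)‖
  have hM : M ^ p ≤ C * L ^ q * (1 + ‖x‖ ^ q) := by
    have hGx := (hG x).trans (mul_one_add_rpow_le_of_le_mul hC hq hL (norm_nonneg x)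
      (le_mul_of_one_le_left (norm_nonneg x) hL))
    have hGSx := (hG (S x)).trans (mul_one_add_rpow_le_of_le_mul hC hq hL (norm_nonneg _)
      ((S.le_opNorm x).trans (by gcongr)))
    obtain hmax | hmax : M = ‖G x‖ ∨ M = ‖G (S x)‖ := max_choice _ _ <;> rw [hmax] <;> assumption
  have hdiff : ‖G x h - T (G (S x) fun j => S (h j))‖ ≤ (1 + L ^ (n + 1)) * M * ∏ j, ‖h j‖ := by
    refine (ContinuousMultilinearMap.norm_apply_sub_apply_comp_le _ _ T S h).trans ?_
    gcongr
    calc ‖G x‖ + ‖T‖ * ‖G (S x)‖ * ‖S‖ ^ n ≤ M + L * M * L ^ n := by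
          gcongr
          exacts [le_max_left _ _, le_max_right _ _]
      _ = (1 + L ^ (n + 1)) * M := by ring
  have hprod : (∏ j, ‖h j‖) ^ p ≤ ∏ j, (1 + ‖h j‖ ^ p) := by
    rw [← Real.finsetProd_rpow _ _ (fun j _ => norm_nonneg _)]
    exact Finset.prod_le_prod (fun j _ => by positivity) fun j _ =>
      le_add_of_nonneg_left zero_le_one
  calc ‖G x h - T (G (S x) fun j => S (h j))‖ ^ p
      ≤ ((1 + L ^ (n + 1)) * M * ∏ j, ‖h j‖) ^ p := by gcongr
    _ = (1 + L ^ (n + 1)) ^ p * M ^ p * (∏ j, ‖h j‖) ^ p := by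
        rw [Real.mul_rpow (by positivity) (by positivity), Real.mul_rpow (by positivity)
          (by positivity)]
    _ ≤ (1 + L ^ (n + 1)) ^ p * (C * L ^ q * (1 + ‖x‖ ^ q)) * ∏ j, (1 + ‖h j‖ ^ p) := by
        gcongr
    _ = _ := by ring

end Operators

theorem ContinuousLinearMap.tendsto_apply_prod_of_tendsto_id {E : Type*}
    [SeminormedAddCommGroup E] [NormedSpace ℝ E] {α β : Type*} {la : Filter α} {lb : Filter β}
    (T : β → E →L[ℝ] E) {C : ℝ} (hTb : ∀ m, ‖T m‖ ≤ C)
    (hT : ∀ y, Tendsto (fun m => T m y) lb (𝓝 y)) {u : α → E} {y : E}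
    (hu : Tendsto u la (𝓝 y)) :
    Tendsto (fun nm : α × β => T nm.2 (u nm.1)) (la ×ˢ lb) (𝓝 y) := by
  rw [tendsto_iff_norm_sub_tendsto_zero] at hu ⊢
  have hTy := tendsto_iff_norm_sub_tendsto_zero.1 (hT y)
  refine squeeze_zero (fun _ => norm_nonneg _) (fun nm => ?_)
    (by simpa using ((hu.const_mul C).comp tendsto_fst).add (hTy.comp tendsto_snd))
  calc ‖T nm.2 (u nm.1) - y‖ = ‖T nm.2 (u nm.1 - y) + (T nm.2 y - y)‖ := by
        rw [map_sub, sub_add_sub_cancel]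
    _ ≤ C * ‖u nm.1 - y‖ + ‖T nm.2 y - y‖ :=
        (norm_add_le _ _).trans (by gcongr; exact (T nm.2).le_of_opNorm_le (hTb nm.2) _)

section Convergence

variable {X Y : Type*} [NormedAddCommGroup X] [NormedSpace ℝ X]
  [NormedAddCommGroup Y] [NormedSpace ℝ Y]

theorem tendsto_cylindrical_apply {n : ℕ}
    {G : X → ContinuousMultilinearMap ℝ (fun _ : Fin n => X) Y} (hGc : Continuous G)
    {α β : Type*} {la : Filter α} {lb : Filter β} (S : α → X →L[ℝ] X) (T : β → Y →L[ℝ] Y)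
    {L : ℝ} (hTb : ∀ m, ‖T m‖ ≤ L) (hS : ∀ x, Tendsto (fun d => S d x) la (𝓝 x))
    (hT : ∀ y, Tendsto (fun m => T m y) lb (𝓝 y)) (x : X) (h : Fin n → X) :
    Tendsto (fun dm : α × β => T dm.2 (G (S dm.1 x) fun j => S dm.1 (h j))) (la ×ˢ lb)
      (𝓝 (G x h)) := by
  have hGeval : Continuous fun z : X × (Fin n → X) => G z.1 z.2 := by fun_prop
  exact ContinuousLinearMap.tendsto_apply_prod_of_tendsto_id T hTb hT
    ((hGeval.tendsto (x, h)).comp ((hS x).prodMk_nhds (tendsto_pi_nhds.2 fun j => hS (h j))))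

theorem tendsto_lintegral_cylindrical_sub [MeasurableSpace X] [BorelSpace X]
    [SecondCountableTopology X] {n : ℕ}
    {G : X → ContinuousMultilinearMap ℝ (fun _ : Fin n => X) Y} (hGc : Continuous G)
    {p q C L : ℝ} (hp : 0 < p) (hq : 0 ≤ q) (hG : ∀ y, ‖G y‖ ^ p ≤ C * (1 + ‖y‖ ^ q))
    (hL : 1 ≤ L) (S : ℕ → X →L[ℝ] X) (T : ℕ → Y →L[ℝ] Y) (hSb : ∀ d, ‖S d‖ ≤ L)
    (hTb : ∀ m, ‖T m‖ ≤ L) (hS : ∀ x, Tendsto (fun d => S d x) atTop (𝓝 x))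
    (hT : ∀ y, Tendsto (fun m => T m y) atTop (𝓝 y)) (ν : Measure (X × (Fin n → X)))
    (hν : ∫⁻ z, momentWeight p q z ∂ν ≠ ⊤) :
    Tendsto (fun dm : ℕ × ℕ => ∫⁻ z,
        (‖G z.1 z.2 - T dm.2 (G (S dm.1 z.1) fun j => S dm.1 (z.2 j))‖₊ : ℝ≥0∞) ^ p ∂ν)
      (atTop ×ˢ atTop) (𝓝 0) := by
  set K := (1 + L ^ (n + 1)) ^ p * (C * L ^ q)
  have hmeas (dm : ℕ × ℕ) : Measurable fun z : X × (Fin n → X) =>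
      (‖G z.1 z.2 - T dm.2 (G (S dm.1 z.1) fun j => S dm.1 (z.2 j))‖₊ : ℝ≥0∞) ^ p := by
    have : Continuous fun z : X × (Fin n → X) =>
        G z.1 z.2 - T dm.2 (G (S dm.1 z.1) fun j => S dm.1 (z.2 j)) := by fun_prop
    exact (ENNReal.continuous_coe.comp this.nnnorm).measurable.pow_const p
  have hbound (dm : ℕ × ℕ) (z : X × (Fin n → X)) :
      (‖G z.1 z.2 - T dm.2 (G (S dm.1 z.1) fun j => S dm.1 (z.2 j))‖₊ : ℝ≥0∞) ^ p
        ≤ ENNReal.ofReal K * momentWeight p q z := by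
    rw [← enorm_eq_nnnorm, ← ofReal_norm, ENNReal.ofReal_rpow_of_nonneg (norm_nonneg _) hp.le,
      ← ofReal_mul_prod_eq_momentWeight hp.le, ← ENNReal.ofReal_mul' (by positivity)]
    exact ENNReal.ofReal_le_ofReal
      (norm_apply_sub_apply_comp_rpow_le G hp.le hq hG hL (hTb dm.2) (hSb dm.1) z.1 z.2)
  have hlim (z : X × (Fin n → X)) : Tendsto (fun dm : ℕ × ℕ =>
      (‖G z.1 z.2 - T dm.2 (G (S dm.1 z.1) fun j => S dm.1 (z.2 j))‖₊ : ℝ≥0∞) ^ p)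
      (atTop ×ˢ atTop) (𝓝 0) := by
    have hcont : Continuous fun v : Y => (‖G z.1 z.2 - v‖₊ : ℝ≥0∞) ^ p :=
      (ENNReal.continuous_rpow_const.comp (ENNReal.continuous_coe.comp
        (continuous_const.sub continuous_id).nnnorm))
    simpa only [Function.comp_def, sub_self, nnnorm_zero, ENNReal.coe_zero,
      ENNReal.zero_rpow_of_pos hp] using
      (hcont.tendsto _).comp (tendsto_cylindrical_apply hGc S T hTb hS hT z.1 z.2)
  simpa using tendsto_lintegral_filter_of_dominated_convergence
    (fun z => ENNReal.ofReal K * momentWeight p q z) (Eventually.of_forall hmeas)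
    (Eventually.of_forall fun dm => ae_of_all _ (hbound dm))
    (by
      rw [lintegral_const_mul' _ _ ENNReal.ofReal_ne_top]
      exact ENNReal.mul_ne_top ENNReal.ofReal_ne_top hν)
    (ae_of_all _ hlim)

end Convergence

theorem stmt_12_general {X Y : Type*} [NormedAddCommGroup X] [NormedSpace ℝ X]
    [TopologicalSpace.SeparableSpace X]
    [NormedAddCommGroup Y] [NormedSpace ℝ Y]
    [MeasurableSpace X] [BorelSpace X]
    (S : ℕ → X →L[ℝ] X) (T : ℕ → Y →L[ℝ] Y) (lam : ℝ)
    (hS : ∀ x : X, Tendsto (fun d => S d x) atTop (𝓝 x))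
    (hT : ∀ y : Y, Tendsto (fun m => T m y) atTop (𝓝 y))
    (hSb : ∀ d, ‖S d‖ ≤ lam) (hTb : ∀ m, ‖T m‖ ≤ lam)
    (k : ℕ) (p q : ℝ) (hp : 1 ≤ p) (hq : 0 ≤ q)
    (μ : Measure (X × (Fin k → X)))
    (hμ : ∫⁻ z, ENNReal.ofReal (1 + ‖z.1‖ ^ q) *
        ∏ j, (1 + (‖z.2 j‖₊ : ℝ≥0∞) ^ p) ∂μ < ⊤)
    (F : X → Y) (hF : ContDiff ℝ k F)
    (CF : ℝ)
    (hgrowth : ∀ i ≤ k, ∀ x : X, ‖iteratedFDeriv ℝ i F x‖ ^ p ≤ CF * (1 + ‖x‖ ^ q))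
    (ε : ℝ) (hε : 0 < ε) :
    ∃ d₀ m₀ : ℕ, ∀ d ≥ d₀, ∀ m ≥ m₀, ∀ i, ∀ hik : i ≤ k,
      ∫⁻ z,
          (‖iteratedFDeriv ℝ i F z.1 z.2 -
              T m (iteratedFDeriv ℝ i F (S d z.1) (fun j => S d (z.2 j)))‖₊ : ℝ≥0∞) ^ p
        ∂(marginalUpTo μ i hik) < ENNReal.ofReal (ε ^ p) := by
  have : SecondCountableTopology X := UniformSpace.secondCountable_of_separable X
  have hεp : 0 < ENNReal.ofReal (ε ^ p) := ENNReal.ofReal_pos.2 (Real.rpow_pos_of_pos hε p)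
  have hall : ∀ᶠ dm : ℕ × ℕ in atTop ×ˢ atTop, ∀ i : Fin (k + 1),
      ∫⁻ z, (‖iteratedFDeriv ℝ i F z.1 z.2 -
          T dm.2 (iteratedFDeriv ℝ i F (S dm.1 z.1) fun j => S dm.1 (z.2 j))‖₊ : ℝ≥0∞) ^ p
        ∂(marginalUpTo μ i i.is_le) < ENNReal.ofReal (ε ^ p) := by
    refine eventually_all.2 fun i => ?_
    have hν := (lintegral_momentWeight_marginalUpTo_le p q μ i i.is_le).trans_lt hμ
    exact (tendsto_lintegral_cylindrical_sub
      (hF.continuous_iteratedFDeriv (by exact_mod_cast i.is_le)) (by linarith) hq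
      (hgrowth i i.is_le) (le_max_left 1 lam) S T (fun d => (hSb d).trans (le_max_right _ _))
      (fun m => (hTb m).trans (le_max_right _ _)) hS hT _ hν.ne).eventually_lt_const hεp
  rw [prod_atTop_atTop_eq] at hall
  obtain ⟨⟨d₀, m₀⟩, h⟩ := eventually_atTop.1 hall
  exact ⟨d₀, m₀, fun d hd m hm i hik => h (d, m) ⟨hd, hm⟩ ⟨i, Nat.lt_succ_of_le hik⟩⟩

/-- under the bounded approximation property for separable `X`, `Y`
(witnessed by uniformly bounded sequences of finite-rank operators converging pointwise to
the identities), finiteness of `‖μ‖_{k,q,p}`, and the polynomial growth bound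
`‖D^iF(x)‖^p ≤ C_F(1+‖x‖^q)`, the cylindrical approximations `T_m ∘ F ∘ S_d` converge to
`F` in the weighted Sobolev norm `‖·‖_{W^{k,p}_{B,μ}}`. -/
theorem stmt_12 {X Y : Type*} [NormedAddCommGroup X] [NormedSpace ℝ X] [CompleteSpace X]
    [TopologicalSpace.SeparableSpace X]
    [NormedAddCommGroup Y] [NormedSpace ℝ Y] [CompleteSpace Y]
    [TopologicalSpace.SeparableSpace Y]
    [MeasurableSpace X] [BorelSpace X]
    (S : ℕ → X →L[ℝ] X) (T : ℕ → Y →L[ℝ] Y) (lam : ℝ)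
    (hSfr : ∀ d, FiniteDimensional ℝ (LinearMap.range (S d : X →ₗ[ℝ] X)))
    (hTfr : ∀ m, FiniteDimensional ℝ (LinearMap.range (T m : Y →ₗ[ℝ] Y)))
    (hS : ∀ x : X, Tendsto (fun d => S d x) atTop (𝓝 x))
    (hT : ∀ y : Y, Tendsto (fun m => T m y) atTop (𝓝 y))
    (hSb : ∀ d, ‖S d‖ ≤ lam) (hTb : ∀ m, ‖T m‖ ≤ lam)
    (k : ℕ) (p q : ℝ) (hp : 1 ≤ p) (hq : 0 ≤ q)
    (μ : Measure (X × (Fin k → X))) [IsFiniteMeasure μ]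
    (hμ : ∫⁻ z, ENNReal.ofReal (1 + ‖z.1‖ ^ q) *
        ∏ j, (1 + (‖z.2 j‖₊ : ℝ≥0∞) ^ p) ∂μ < ⊤)
    (F : X → Y) (hF : ContDiff ℝ k F)
    (CF : ℝ)
    (hgrowth : ∀ i ≤ k, ∀ x : X, ‖iteratedFDeriv ℝ i F x‖ ^ p ≤ CF * (1 + ‖x‖ ^ q))
    (ε : ℝ) (hε : 0 < ε) :
    ∃ d₀ m₀ : ℕ, ∀ d ≥ d₀, ∀ m ≥ m₀, ∀ i, ∀ hik : i ≤ k,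
      ∫⁻ z,
          (‖iteratedFDeriv ℝ i F z.1 z.2 -
              T m (iteratedFDeriv ℝ i F (S d z.1) (fun j => S d (z.2 j)))‖₊ : ℝ≥0∞) ^ p
        ∂(marginalUpTo μ i hik) < ENNReal.ofReal (ε ^ p) :=
  stmt_12_general S T lam hS hT hSb hTb k p q hp hq μ hμ F hF CF hgrowth ε hε
end

section
/- Let X and Y be real Banach spaces, k ∈ ℕ, p ≥ 1, and let μ be a finite Borel measure on X × X^k satisfying the Radon–Nikodym domination assumption. Let (𝒩_{N,N'}) be a family of finite-dimensional approximators with the Sobolev density property. Let F : X → Y be k-times continuously Fréchet differentiable with ‖F‖_{W^{k,p}_{B,μ}} < ∞, and suppose there exists a sequence of cylindrical maps G_n = D_n ∘ f_n ∘ E_n (with E_n : X → ℝ^{N_n} and D_n : ℝ^{N_n'} → Y continuous linear and f_n : ℝ^{N_n} → ℝ^{N_n'} k-times continuously differentiable) such that max_{0 ≤ i ≤ k} ∫ ‖D^i f_n(y)‖^p d((E_n)_# μ^0)(y) < ∞ for each n and ‖F − G_n‖_{W^{k,p}_{B,μ}} → 0 as n → ∞. Then for every ε > 0 there exist N, N'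 ∈ ℕ, continuous linear maps E : X → ℝ^N and D : ℝ^{N'} → Y, and f ∈ 𝒩_{N,N'} such that ‖F − D ∘ f ∘ E‖_{W^{k,p}_{B,μ}} < ε. -/
/-! Pick `n` with `D_n ∘ f_n ∘ E_n` within `δ` of `F`. By the chain rule,
`D^i(D ∘ g ∘ E)(x)(h) = D (D^i g (E x) (E h₁, …, E hᵢ))`, so the weighted error between
`D_n ∘ f_n ∘ E_n` and `D_n ∘ f ∘ E_n` is pointwise at most
`‖D_n‖ ‖E_n‖^i ‖D^i f_n (E_n x) - D^i f (E_n x)‖ ∏ ‖h_r‖`. The Radon–Nikodym domination absorbs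
the weight `∏ ‖h_r‖^p` into the marginal `μ^0`, bounding this error by a constant times the
Sobolev error of `f_n - f` in `L^p((E_n)_# μ^0)`, which the density property makes as small as
we like. The two errors combine by `(a + b)^p ≤ 2^(p-1) (a^p + b^p)`. -/

open MeasureTheory Filter
open scoped Topology ENNReal NNReal

theorem lintegral_comp_fst_mul_le_of_setLIntegral_le {α β : Type*} [MeasurableSpace α]
    [MeasurableSpace β] (ν : Measure (α × β)) (ρ : Measure α)
    {w : α × β → ℝ≥0∞} (hw : Measurable w) {c : ℝ≥0∞}
    (hdom : ∀ A, MeasurableSet A → ∫⁻ z in Prod.fst ⁻¹' A, w z ∂ν ≤ c * ρ A)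
    {φ : α → ℝ≥0∞} (hφ : Measurable φ) :
    ∫⁻ z, φ z.1 * w z ∂ν ≤ c * ∫⁻ x, φ x ∂ρ := by
  have hmap : (ν.withDensity w).map Prod.fst ≤ c • ρ := by
    refine Measure.le_iff.2 fun A hA => ?_
    rw [Measure.map_apply measurable_fst hA, withDensity_apply _ (measurable_fst hA)]
    exact hdom A hA
  calc ∫⁻ z, φ z.1 * w z ∂ν
      = ∫⁻ z, φ z.1 ∂(ν.withDensity w) := by
        simpa only [Pi.mul_apply, Function.comp_apply, mul_comm] using
          (lintegral_withDensity_eq_lintegral_mul _ hw (hφ.comp measurable_fst)).symm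
    _ = ∫⁻ x, φ x ∂((ν.withDensity w).map Prod.fst) := (lintegral_map hφ measurable_fst).symm
    _ ≤ ∫⁻ x, φ x ∂(c • ρ) := lintegral_mono' hmap le_rfl
    _ = c * ∫⁻ x, φ x ∂ρ := lintegral_smul_measure _ _

theorem map_fst_marginalUpTo {X : Type*} [MeasurableSpace X] {k : ℕ}
    (μ : Measure (X × (Fin k → X))) (i : ℕ) (hik : i ≤ k) :
    (marginalUpTo μ i hik).map Prod.fst = μ.map Prod.fst := by
  rw [marginalUpTo, Measure.map_map measurable_fst (by fun_prop)]
  rfl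

theorem exists_uniform_marginalUpTo_domination {X : Type*} [SeminormedAddCommGroup X]
    [MeasurableSpace X] {k : ℕ} {p : ℝ} (μ : Measure (X × (Fin k → X))) (C : ℕ → ℝ)
    (hRNdom : ∀ i, 1 ≤ i → ∀ hik : i ≤ k, ∀ A : Set X, MeasurableSet A →
      ∫⁻ z in Prod.fst ⁻¹' A, ∏ r, (‖z.2 r‖₊ : ℝ≥0∞) ^ p ∂(marginalUpTo μ i hik) ≤
        ENNReal.ofReal (C i) * (μ.map Prod.fst) A) :
    ∃ c : ℝ≥0∞, c ≠ ⊤ ∧ ∀ i, ∀ hik : i ≤ k, ∀ A : Set X, MeasurableSet A →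
      ∫⁻ z in Prod.fst ⁻¹' A, ∏ r, (‖z.2 r‖₊ : ℝ≥0∞) ^ p ∂(marginalUpTo μ i hik) ≤
        c * (μ.map Prod.fst) A := by
  refine ⟨1 + ∑ j ∈ Finset.Icc 1 k, ENNReal.ofReal (C j), by simp, fun i hik A hA => ?_⟩
  rcases Nat.eq_zero_or_pos i with rfl | hi
  · calc ∫⁻ z in Prod.fst ⁻¹' A, ∏ r, (‖z.2 r‖₊ : ℝ≥0∞) ^ p ∂(marginalUpTo μ 0 hik)
        = (μ.map Prod.fst) A := by
          rw [← map_fst_marginalUpTo μ 0 hik, Measure.map_apply measurable_fst hA]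
          simp
      _ ≤ _ := le_mul_of_one_le_left' le_self_add
  · refine (hRNdom i hi hik A hA).trans (mul_le_mul_left ?_ _)
    exact le_add_left (Finset.single_le_sum (f := fun j => ENNReal.ofReal (C j))
      (fun _ _ => zero_le) (Finset.mem_Icc.2 ⟨hi, hik⟩))

theorem lintegral_nnnorm_sub_rpow_le {α E : Type*} [MeasurableSpace α]
    [SeminormedAddCommGroup E] (ν : Measure α) {p : ℝ} (hp : 1 ≤ p) (u v w : α → E)
    (hvw : Measurable fun a => (‖v a - w a‖₊ : ℝ≥0∞) ^ p) :
    ∫⁻ a, (‖u a - w a‖₊ : ℝ≥0∞) ^ p ∂ν ≤ 2 ^ (p - 1) *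
      (∫⁻ a, (‖u a - v a‖₊ : ℝ≥0∞) ^ p ∂ν + ∫⁻ a, (‖v a - w a‖₊ : ℝ≥0∞) ^ p ∂ν) := by
  rw [← lintegral_add_right _ hvw, ← lintegral_const_mul' _ _ (by finiteness)]
  refine lintegral_mono fun a => ?_
  refine (ENNReal.rpow_le_rpow ?_ (zero_le_one.trans hp)).trans
    (ENNReal.rpow_add_le_mul_rpow_add_rpow _ _ hp)
  rw [← sub_add_sub_cancel (u a) (v a) (w a)]
  exact_mod_cast nnnorm_add_le _ _

theorem ENNReal.exists_pos_two_rpow_mul_add_lt (p : ℝ) {T : ℝ≥0∞} (hT : 0 < T) :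
    ∃ δ : ℝ≥0∞, 0 < δ ∧ 2 ^ (p - 1) * (δ + δ) < T := by
  have h : Tendsto (fun δ : ℝ≥0∞ => 2 ^ (p - 1) * (δ + δ)) (𝓝[>] 0) (𝓝 0) := by
    have := ENNReal.Tendsto.const_mul (a := 2 ^ (p - 1)) (tendsto_id.add tendsto_id)
      (Or.inr (by finiteness)) (f := 𝓝 (0 : ℝ≥0∞))
    simpa using this.mono_left nhdsWithin_le_nhds
  exact ((h.eventually (gt_mem_nhds hT)).and self_mem_nhdsWithin).exists.imp
    fun δ hδ => ⟨hδ.2, hδ.1⟩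

theorem ENNReal.exists_pos_mul_ofReal_rpow_lt {K : ℝ≥0∞} (hK : K ≠ ⊤) {p : ℝ} (hp : 0 < p)
    {δ : ℝ≥0∞} (hδ : 0 < δ) : ∃ η : ℝ, 0 < η ∧ K * ENNReal.ofReal (η ^ p) < δ := by
  have h : Tendsto (fun η : ℝ => K * ENNReal.ofReal (η ^ p)) (𝓝[>] 0) (𝓝 0) := by
    have hrpow : Tendsto (fun η : ℝ => η ^ p) (𝓝 0) (𝓝 0) := by
      simpa [Real.zero_rpow hp.ne'] using (Real.continuousAt_rpow_const 0 p (Or.inr hp.le)).tendsto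
    have := ENNReal.Tendsto.const_mul (ENNReal.tendsto_ofReal hrpow) (Or.inr hK)
    simpa using this.mono_left nhdsWithin_le_nhds
  exact ((h.eventually (gt_mem_nhds hδ)).and self_mem_nhdsWithin).exists.imp
    fun η hη => ⟨hη.2, hη.1⟩

section Cylinder

variable {X Y Z W : Type*} [NormedAddCommGroup X] [NormedSpace ℝ X]
  [NormedAddCommGroup Y] [NormedSpace ℝ Y] [NormedAddCommGroup Z] [NormedSpace ℝ Z]
  [NormedAddCommGroup W] [NormedSpace ℝ W]

theorem iteratedFDeriv_clm_comp_comp_clm_apply {i : ℕ} (E : X →L[ℝ] Z) (D : W →L[ℝ] Y)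
    {g : Z → W} (hg : ContDiff ℝ i g) (x : X) (h : Fin i → X) :
    iteratedFDeriv ℝ i (fun x => D (g (E x))) x h =
      D (iteratedFDeriv ℝ i g (E x) fun r => E (h r)) := by
  rw [show (fun x => D (g (E x))) = (⇑D ∘ g) ∘ ⇑E from rfl,
    E.iteratedFDeriv_comp_right (D.contDiff.comp hg) x le_rfl,
    ContinuousMultilinearMap.compContinuousLinearMap_apply,
    D.iteratedFDeriv_comp_left hg.contDiffAt le_rfl]
  rfl

theorem nnnorm_iteratedFDeriv_clm_comp_comp_clm_sub_le {i : ℕ} (E : X →L[ℝ] Z)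
    (D : W →L[ℝ] Y) {g₁ g₂ : Z → W} (hg₁ : ContDiff ℝ i g₁) (hg₂ : ContDiff ℝ i g₂) (x : X)
    (h : Fin i → X) :
    ‖iteratedFDeriv ℝ i (fun x => D (g₁ (E x))) x h -
        iteratedFDeriv ℝ i (fun x => D (g₂ (E x))) x h‖₊ ≤
      ‖D‖₊ * ‖E‖₊ ^ i * ‖iteratedFDeriv ℝ i g₁ (E x) - iteratedFDeriv ℝ i g₂ (E x)‖₊ *
        ∏ r, ‖h r‖₊ := by
  set M := iteratedFDeriv ℝ i g₁ (E x) - iteratedFDeriv ℝ i g₂ (E x)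
  rw [iteratedFDeriv_clm_comp_comp_clm_apply E D hg₁,
    iteratedFDeriv_clm_comp_comp_clm_apply E D hg₂, ← map_sub, ← sub_apply]
  calc ‖D (M fun r => E (h r))‖₊
      ≤ ‖D‖₊ * (‖M‖₊ * ∏ r, ‖E (h r)‖₊) :=
        (D.le_opNNNorm _).trans (by gcongr; exact M.le_opNNNorm _)
    _ ≤ ‖D‖₊ * (‖M‖₊ * ∏ r, (‖E‖₊ * ‖h r‖₊)) := by
        gcongr with r
        exact E.le_opNNNorm _
    _ = ‖D‖₊ * ‖E‖₊ ^ i * ‖M‖₊ * ∏ r, ‖h r‖₊ := by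
        rw [Finset.prod_mul_distrib, Finset.prod_const, Finset.card_univ, Fintype.card_fin]
        ring

/- `X` need not be separable, so a continuous function on `X × X^i` need not be measurable for
the product σ-algebra; measurability is obtained by factoring through the second countable `Z`. -/
theorem measurable_iteratedFDeriv_clm_comp_comp_clm_sub [MeasurableSpace X]
    [OpensMeasurableSpace X] [MeasurableSpace Z] [BorelSpace Z] [SecondCountableTopology Z]
    {i : ℕ} {p : ℝ} (E : X →L[ℝ] Z) (D : W →L[ℝ] Y) {g₁ g₂ : Z → W}
    (hg₁ : ContDiff ℝ i g₁) (hg₂ : ContDiff ℝ i g₂) :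
    Measurable fun z : X × (Fin i → X) =>
      (‖iteratedFDeriv ℝ i (fun x => D (g₁ (E x))) z.1 z.2 -
          iteratedFDeriv ℝ i (fun x => D (g₂ (E x))) z.1 z.2‖₊ : ℝ≥0∞) ^ p := by
  simp only [iteratedFDeriv_clm_comp_comp_clm_apply E D hg₁,
    iteratedFDeriv_clm_comp_comp_clm_apply E D hg₂]
  have h₁ := hg₁.continuous_iteratedFDeriv le_rfl
  have h₂ := hg₂.continuous_iteratedFDeriv le_rfl
  have hΦ : Continuous fun y : Z × (Fin i → Z) =>
      (‖D (iteratedFDeriv ℝ i g₁ y.1 y.2) - D (iteratedFDeriv ℝ i g₂ y.1 y.2)‖₊ : ℝ≥0∞) ^ p := by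
    fun_prop
  exact hΦ.measurable.comp (f := fun z : X × (Fin i → X) => (E z.1, fun r => E (z.2 r)))
    (by fun_prop)

end Cylinder

section CylinderIntegral

variable {X Y Z W : Type*} [NormedAddCommGroup X] [NormedSpace ℝ X]
  [NormedAddCommGroup Y] [NormedSpace ℝ Y] [NormedAddCommGroup Z] [NormedSpace ℝ Z]
  [NormedAddCommGroup W] [NormedSpace ℝ W]
  [MeasurableSpace X] [OpensMeasurableSpace X] [MeasurableSpace Z] [BorelSpace Z]

theorem lintegral_iteratedFDeriv_clm_comp_comp_clm_sub_le {i : ℕ} {p : ℝ} (hp : 0 ≤ p)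
    {ν : Measure (X × (Fin i → X))} {ρ : Measure X} {c : ℝ≥0∞}
    (hdom : ∀ A, MeasurableSet A →
      ∫⁻ z in Prod.fst ⁻¹' A, ∏ r, (‖z.2 r‖₊ : ℝ≥0∞) ^ p ∂ν ≤ c * ρ A)
    (E : X →L[ℝ] Z) (D : W →L[ℝ] Y) {g₁ g₂ : Z → W}
    (hg₁ : ContDiff ℝ i g₁) (hg₂ : ContDiff ℝ i g₂) :
    ∫⁻ z, (‖iteratedFDeriv ℝ i (fun x => D (g₁ (E x))) z.1 z.2 -
        iteratedFDeriv ℝ i (fun x => D (g₂ (E x))) z.1 z.2‖₊ : ℝ≥0∞) ^ p ∂ν ≤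
      ((‖D‖₊ * ‖E‖₊ ^ i : ℝ≥0) : ℝ≥0∞) ^ p * c *
        ∫⁻ y, (‖iteratedFDeriv ℝ i g₁ y - iteratedFDeriv ℝ i g₂ y‖₊ : ℝ≥0∞) ^ p ∂(ρ.map E) := by
  set ψ : Z → ℝ≥0∞ := fun y => (‖iteratedFDeriv ℝ i g₁ y - iteratedFDeriv ℝ i g₂ y‖₊ : ℝ≥0∞) ^ p
  have hψ : Measurable ψ := by
    have h₁ := hg₁.continuous_iteratedFDeriv le_rfl
    have h₂ := hg₂.continuous_iteratedFDeriv le_rfl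
    exact Continuous.measurable (by fun_prop)
  have hw : Measurable fun z : X × (Fin i → X) => ∏ r, (‖z.2 r‖₊ : ℝ≥0∞) ^ p := by fun_prop
  calc _ ≤ ∫⁻ z, ((‖D‖₊ * ‖E‖₊ ^ i : ℝ≥0) : ℝ≥0∞) ^ p *
          (ψ (E z.1) * ∏ r, (‖z.2 r‖₊ : ℝ≥0∞) ^ p) ∂ν := by
        refine lintegral_mono fun z => ?_
        rw [ENNReal.prod_rpow_of_nonneg hp, ← ENNReal.mul_rpow_of_nonneg _ _ hp,
          ← ENNReal.mul_rpow_of_nonneg _ _ hp]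
        gcongr
        rw [← mul_assoc]
        exact_mod_cast nnnorm_iteratedFDeriv_clm_comp_comp_clm_sub_le E D hg₁ hg₂ z.1 z.2
    _ ≤ ((‖D‖₊ * ‖E‖₊ ^ i : ℝ≥0) : ℝ≥0∞) ^ p * (c * ∫⁻ x, ψ (E x) ∂ρ) := by
        rw [lintegral_const_mul' _ _ (by finiteness)]
        gcongr
        exact lintegral_comp_fst_mul_le_of_setLIntegral_le ν ρ hw hdom
          (hψ.comp E.continuous.measurable)
    _ = _ := by rw [lintegral_map hψ E.continuous.measurable, mul_assoc]

theorem exists_lintegral_iteratedFDeriv_clm_comp_comp_clm_sub_le {k : ℕ} {p : ℝ} (hp : 0 ≤ p)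
    (μ : Measure (X × (Fin k → X))) {ρ : Measure X} {c : ℝ≥0∞} (hc : c ≠ ⊤)
    (hdom : ∀ i, ∀ hik : i ≤ k, ∀ A, MeasurableSet A →
      ∫⁻ z in Prod.fst ⁻¹' A, ∏ r, (‖z.2 r‖₊ : ℝ≥0∞) ^ p ∂(marginalUpTo μ i hik) ≤ c * ρ A)
    (E : X →L[ℝ] Z) (D : W →L[ℝ] Y) :
    ∃ K : ℝ≥0∞, K ≠ ⊤ ∧ ∀ g₁ g₂ : Z → W, ContDiff ℝ k g₁ → ContDiff ℝ k g₂ →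
      ∀ i, ∀ hik : i ≤ k,
        ∫⁻ z, (‖iteratedFDeriv ℝ i (fun x => D (g₁ (E x))) z.1 z.2 -
            iteratedFDeriv ℝ i (fun x => D (g₂ (E x))) z.1 z.2‖₊ : ℝ≥0∞) ^ p
          ∂(marginalUpTo μ i hik) ≤
        K * ∫⁻ y, (‖iteratedFDeriv ℝ i g₁ y - iteratedFDeriv ℝ i g₂ y‖₊ : ℝ≥0∞) ^ p
          ∂(ρ.map E) := by
  refine ⟨∑ i ∈ Finset.range (k + 1), ((‖D‖₊ * ‖E‖₊ ^ i : ℝ≥0) : ℝ≥0∞) ^ p * c,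
    ENNReal.sum_ne_top.2 fun _ _ => by finiteness, fun g₁ g₂ hg₁ hg₂ i hik => ?_⟩
  have hi : (i : WithTop ℕ∞) ≤ k := by exact_mod_cast hik
  refine (lintegral_iteratedFDeriv_clm_comp_comp_clm_sub_le hp (hdom i hik) E D
    (hg₁.of_le hi) (hg₂.of_le hi)).trans (mul_le_mul_left ?_ _)
  exact Finset.single_le_sum (f := fun i => ((‖D‖₊ * ‖E‖₊ ^ i : ℝ≥0) : ℝ≥0∞) ^ p * c)
    (fun _ _ => zero_le) (Finset.mem_range.2 (Nat.lt_succ_of_le hik))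

end CylinderIntegral

theorem stmt_13_general {X Y : Type*} [NormedAddCommGroup X] [NormedSpace ℝ X]
    [NormedAddCommGroup Y] [NormedSpace ℝ Y]
    [MeasurableSpace X] [BorelSpace X]
    (k : ℕ) (p : ℝ) (hp : 1 ≤ p)
    (μ : Measure (X × (Fin k → X))) [IsFiniteMeasure μ]
    (C : ℕ → ℝ)
    (hRNdom : ∀ i, 1 ≤ i → ∀ hik : i ≤ k, ∀ A : Set X, MeasurableSet A →
      ∫⁻ z in Prod.fst ⁻¹' A, ∏ r, (‖z.2 r‖₊ : ℝ≥0∞) ^ p ∂(marginalUpTo μ i hik) ≤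
        ENNReal.ofReal (C i) * (μ.map Prod.fst) A)
    (𝒩 : (N N' : ℕ) → Set ((Fin N → ℝ) → (Fin N' → ℝ)))
    (h𝒩smooth : ∀ N N', ∀ f ∈ 𝒩 N N', ContDiff ℝ k f)
    (h𝒩dense : ∀ (N N' : ℕ) (ν : Measure (Fin N → ℝ)), IsFiniteMeasure ν →
      ∀ g : (Fin N → ℝ) → (Fin N' → ℝ), ContDiff ℝ k g →
      (∀ i ≤ k, ∫⁻ y, (‖iteratedFDeriv ℝ i g y‖₊ : ℝ≥0∞) ^ p ∂ν < ⊤) →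
      ∀ ε : ℝ, 0 < ε → ∃ f ∈ 𝒩 N N', ∀ i ≤ k,
        ∫⁻ y, (‖iteratedFDeriv ℝ i g y - iteratedFDeriv ℝ i f y‖₊ : ℝ≥0∞) ^ p ∂ν <
          ENNReal.ofReal (ε ^ p))
    (F : X → Y)
    (NN NN' : ℕ → ℕ)
    (En : ∀ n : ℕ, X →L[ℝ] (Fin (NN n) → ℝ))
    (fn : ∀ n : ℕ, (Fin (NN n) → ℝ) → (Fin (NN' n) → ℝ))
    (Dn : ∀ n : ℕ, (Fin (NN' n) → ℝ) →L[ℝ] Y)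
    (hfn : ∀ n, ContDiff ℝ k (fn n))
    (hfnW : ∀ n, ∀ i ≤ k,
      ∫⁻ y, (‖iteratedFDeriv ℝ i (fn n) y‖₊ : ℝ≥0∞) ^ p
        ∂((μ.map Prod.fst).map (En n)) < ⊤)
    (hconv : Tendsto (fun n =>
        ⨆ i : Fin (k + 1),
          ∫⁻ z,
            (‖iteratedFDeriv ℝ (i : ℕ) F z.1 z.2 -
                iteratedFDeriv ℝ (i : ℕ) (fun x : X => Dn n (fn n (En n x))) z.1
                  z.2‖₊ : ℝ≥0∞) ^ p
          ∂(marginalUpTo μ (i : ℕ) i.is_le)) atTop (𝓝 0))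
    (ε : ℝ) (hε : 0 < ε) :
    ∃ (N N' : ℕ) (E : X →L[ℝ] (Fin N → ℝ)) (D : (Fin N' → ℝ) →L[ℝ] Y)
      (f : (Fin N → ℝ) → (Fin N' → ℝ)), f ∈ 𝒩 N N' ∧
      ∀ i, ∀ hik : i ≤ k,
        ∫⁻ z,
            (‖iteratedFDeriv ℝ i F z.1 z.2 -
                iteratedFDeriv ℝ i (fun x : X => D (f (E x))) z.1 z.2‖₊ : ℝ≥0∞) ^ p
          ∂(marginalUpTo μ i hik) < ENNReal.ofReal (ε ^ p) := by
  have hp₀ : 0 < p := zero_lt_one.trans_le hp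
  obtain ⟨δ, hδ, hδε⟩ := ENNReal.exists_pos_two_rpow_mul_add_lt p
    (ENNReal.ofReal_pos.2 (Real.rpow_pos_of_pos hε p))
  obtain ⟨n, hn⟩ := (hconv.eventually (gt_mem_nhds hδ)).exists
  obtain ⟨c, hc, hdom⟩ := exists_uniform_marginalUpTo_domination μ C hRNdom
  obtain ⟨K, hK, hcyl⟩ :=
    exists_lintegral_iteratedFDeriv_clm_comp_comp_clm_sub_le hp₀.le μ hc hdom (En n) (Dn n)
  obtain ⟨η, hη, hηδ⟩ := ENNReal.exists_pos_mul_ofReal_rpow_lt hK hp₀ hδ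
  obtain ⟨f, hf𝒩, hf⟩ := h𝒩dense _ _ _ (Measure.isFiniteMeasure_map _ _) (fn n) (hfn n)
    (hfnW n) η hη
  have hfk := h𝒩smooth _ _ f hf𝒩
  refine ⟨NN n, NN' n, En n, Dn n, f, hf𝒩, fun i hik => ?_⟩
  have hi : (i : WithTop ℕ∞) ≤ k := by exact_mod_cast hik
  refine ((lintegral_nnnorm_sub_rpow_le _ hp _ _ _
    (measurable_iteratedFDeriv_clm_comp_comp_clm_sub (En n) (Dn n) ((hfn n).of_le hi)
      (hfk.of_le hi))).trans (mul_le_mul_right (add_le_add ?_ ?_) _)).trans_lt hδε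
  · exact (le_iSup_of_le (⟨i, Nat.lt_succ_of_le hik⟩ : Fin (k + 1)) le_rfl).trans hn.le
  · exact (hcyl _ _ (hfn n) hfk i hik).trans ((mul_le_mul_right (hf i hik).le K).trans hηδ.le)

/-- abstract universal approximation in the weighted Sobolev norm: under the
Radon–Nikodym domination assumption, given a family of finite-dimensional approximators
with the Sobolev density property, every `C^k` map `F` with finite weighted Sobolev norm
that is approximable in `‖·‖_{W^{k,p}_{B,μ}}` by a sequence of `C^k` cylindrical maps with
finite operator-norm Sobolev norms can be approximated to any accuracy `ε` by an
encoder-decoder architecture `D ∘ f ∘ E` with `f ∈ 𝒩 N N'`. -/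
theorem stmt_13 {X Y : Type*} [NormedAddCommGroup X] [NormedSpace ℝ X] [CompleteSpace X]
    [NormedAddCommGroup Y] [NormedSpace ℝ Y] [CompleteSpace Y]
    [MeasurableSpace X] [BorelSpace X]
    (k : ℕ) (p : ℝ) (hp : 1 ≤ p)
    (μ : Measure (X × (Fin k → X))) [IsFiniteMeasure μ]
    (C : ℕ → ℝ) (hCpos : ∀ i, 1 ≤ i → i ≤ k → 0 < C i)
    (hRNfin : ∀ i, 1 ≤ i → ∀ hik : i ≤ k,
      ∫⁻ z, ∏ r, (‖z.2 r‖₊ : ℝ≥0∞) ^ p ∂(marginalUpTo μ i hik) < ⊤)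
    (hRNdom : ∀ i, 1 ≤ i → ∀ hik : i ≤ k, ∀ A : Set X, MeasurableSet A →
      ∫⁻ z in Prod.fst ⁻¹' A, ∏ r, (‖z.2 r‖₊ : ℝ≥0∞) ^ p ∂(marginalUpTo μ i hik) ≤
        ENNReal.ofReal (C i) * (μ.map Prod.fst) A)
    (𝒩 : (N N' : ℕ) → Set ((Fin N → ℝ) → (Fin N' → ℝ)))
    (h𝒩smooth : ∀ N N', ∀ f ∈ 𝒩 N N', ContDiff ℝ k f)
    (h𝒩dense : ∀ (N N' : ℕ) (ν : Measure (Fin N → ℝ)), IsFiniteMeasure ν →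
      ∀ g : (Fin N → ℝ) → (Fin N' → ℝ), ContDiff ℝ k g →
      (∀ i ≤ k, ∫⁻ y, (‖iteratedFDeriv ℝ i g y‖₊ : ℝ≥0∞) ^ p ∂ν < ⊤) →
      ∀ ε : ℝ, 0 < ε → ∃ f ∈ 𝒩 N N', ∀ i ≤ k,
        ∫⁻ y, (‖iteratedFDeriv ℝ i g y - iteratedFDeriv ℝ i f y‖₊ : ℝ≥0∞) ^ p ∂ν <
          ENNReal.ofReal (ε ^ p))
    (F : X → Y) (hF : ContDiff ℝ k F)
    (hFW : ∀ i, ∀ hik : i ≤ k,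
      ∫⁻ z, (‖iteratedFDeriv ℝ i F z.1 z.2‖₊ : ℝ≥0∞) ^ p ∂(marginalUpTo μ i hik) < ⊤)
    (NN NN' : ℕ → ℕ)
    (En : ∀ n : ℕ, X →L[ℝ] (Fin (NN n) → ℝ))
    (fn : ∀ n : ℕ, (Fin (NN n) → ℝ) → (Fin (NN' n) → ℝ))
    (Dn : ∀ n : ℕ, (Fin (NN' n) → ℝ) →L[ℝ] Y)
    (hfn : ∀ n, ContDiff ℝ k (fn n))
    (hfnW : ∀ n, ∀ i ≤ k,
      ∫⁻ y, (‖iteratedFDeriv ℝ i (fn n) y‖₊ : ℝ≥0∞) ^ p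
        ∂((μ.map Prod.fst).map (En n)) < ⊤)
    (hconv : Tendsto (fun n =>
        ⨆ i : Fin (k + 1),
          ∫⁻ z,
            (‖iteratedFDeriv ℝ (i : ℕ) F z.1 z.2 -
                iteratedFDeriv ℝ (i : ℕ) (fun x : X => Dn n (fn n (En n x))) z.1
                  z.2‖₊ : ℝ≥0∞) ^ p
          ∂(marginalUpTo μ (i : ℕ) i.is_le)) atTop (𝓝 0))
    (ε : ℝ) (hε : 0 < ε) :
    ∃ (N N' : ℕ) (E : X →L[ℝ] (Fin N → ℝ)) (D : (Fin N' → ℝ) →L[ℝ] Y)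
      (f : (Fin N → ℝ) → (Fin N' → ℝ)), f ∈ 𝒩 N N' ∧
      ∀ i, ∀ hik : i ≤ k,
        ∫⁻ z,
            (‖iteratedFDeriv ℝ i F z.1 z.2 -
                iteratedFDeriv ℝ i (fun x : X => D (f (E x))) z.1 z.2‖₊ : ℝ≥0∞) ^ p
          ∂(marginalUpTo μ i hik) < ENNReal.ofReal (ε ^ p) :=
  stmt_13_general k p hp μ C hRNdom 𝒩 h𝒩smooth h𝒩dense F NN NN' En fn Dn hfn hfnW hconv ε hε
end
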